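/- arXiv:2410.07254 — 10 statements merged into one kernel-verified Lean document; each statement's English description precedes it below -/
import Mathlib

section
/- Let s ≥ 2 and let M ∈ ℝ^{s×s} be such that M⋆ + M⋆ᵀ is positive semidefinite and has rank s−1. Then there exists a constant C > 0 such that for every vector ξ = (ξ₁,…,ξ_s) ∈ ℝˢ one has ξᵀ M⋆ ξ ≥ C · Σ_{1≤i<j≤s} (ξᵢ − ξⱼ)². -/
open Matrix BigOperators

/-- The matrix `T ∈ ℝ^{s×s}` with `T_{ii} = 1` for `2 ≤ i ≤ s`, `T_{i1} = -1` for
`2 ≤ i ≤ s`, and all other entries `0` (0-indexed: rows `i ≠ 0`). -/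
def Tmat (s : ℕ) : Matrix (Fin s) (Fin s) ℝ :=
  Matrix.of fun i j => if i.val ≠ 0 ∧ j = i then 1 else if i.val ≠ 0 ∧ j.val = 0 then -1 else 0

/-- The matrix `S ∈ ℝ^{s×s}` with `S_{11} = 1`, `S_{ss} = -1` and all other entries `0`. -/
def Smat (s : ℕ) : Matrix (Fin s) (Fin s) ℝ :=
  Matrix.of fun i j =>
    if i.val = 0 ∧ j.val = 0 then 1 else if i.val = s - 1 ∧ j.val = s - 1 then -1 else 0

/-- `M⋆ := M·T + S`. -/
def Mstar {s : ℕ} (M : Matrix (Fin s) (Fin s) ℝ) : Matrix (Fin s) (Fin s) ℝ :=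
  M * Tmat s + Smat s

lemma quad_transpose {s : ℕ} (B : Matrix (Fin s) (Fin s) ℝ) (x : Fin s → ℝ) :
    x ⬝ᵥ Bᵀ *ᵥ x = x ⬝ᵥ B *ᵥ x := by
  simp only [dotProduct, mulVec, dotProduct, transpose_apply, Finset.mul_sum]
  rw [Finset.sum_comm]
  exact Finset.sum_congr rfl fun i _ => Finset.sum_congr rfl fun j _ => by ring

lemma Tmat_rowsum {s : ℕ} (k : Fin s) : ∑ j, Tmat s k j = 0 := by
  unfold Tmat
  simp only [of_apply]
  rcases eq_or_ne k.val 0 with h | h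
  · simp [h]
  · have hz : (0 : ℕ) < s := k.pos
    have hkz : k ≠ ⟨0, hz⟩ := by simp [Fin.ext_iff, h]
    have key : ∀ j : Fin s,
        (if k.val ≠ 0 ∧ j = k then (1:ℝ) else if k.val ≠ 0 ∧ j.val = 0 then -1 else 0)
          = (if j = k then 1 else 0) + (if j = ⟨0, hz⟩ then -1 else 0) := by
      intro j
      rcases eq_or_ne j k with rfl | hjk
      · simp [h, hkz.symm, Fin.ext_iff]
      · rcases eq_or_ne j (⟨0, hz⟩ : Fin s) with rfl | hj0
        · simp [h, hjk]
        · have hj : j.val ≠ 0 := by simpa [Fin.ext_iff] using hj0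
          simp [hjk, hj0, hj]
    rw [Finset.sum_congr rfl fun j _ => key j, Finset.sum_add_distrib]
    simp

lemma Smat_totsum {s : ℕ} (hs : 2 ≤ s) : ∑ i : Fin s, ∑ j : Fin s, Smat s i j = 0 := by
  unfold Smat
  simp only [of_apply]
  have hz : (0 : ℕ) < s := by omega
  have hw : s - 1 < s := by omega
  have key : ∀ i j : Fin s,
      (if i.val = 0 ∧ j.val = 0 then (1:ℝ) else if i.val = s - 1 ∧ j.val = s - 1 then -1 else 0)
        = (if i = ⟨0, hz⟩ then (if j = ⟨0, hz⟩ then 1 else 0) else 0)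
          + (if i = ⟨s-1, hw⟩ then (if j = ⟨s-1, hw⟩ then -1 else 0) else 0) := by
    intro i j
    have h01 : (0:ℕ) ≠ s - 1 := by omega
    by_cases hi0 : i.val = 0 <;> by_cases hj0 : j.val = 0 <;>
      by_cases hi1 : i.val = s - 1 <;> by_cases hj1 : j.val = s - 1 <;>
      simp_all [Fin.ext_iff]
  rw [Finset.sum_congr rfl fun i _ => Finset.sum_congr rfl fun j _ => key i j]
  simp [Finset.sum_add_distrib]

lemma pair_sum {s : ℕ} (ξ : Fin s → ℝ) :
    ∑ i : Fin s, ∑ j : Fin s, (if i < j then (ξ i - ξ j) ^ 2 else 0)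
      = s * (∑ i, (ξ i)^2) - (∑ i, ξ i)^2 := by
  have hswap : ∑ i : Fin s, ∑ j : Fin s, (if j < i then (ξ i - ξ j)^2 else 0)
      = ∑ i : Fin s, ∑ j : Fin s, (if i < j then (ξ i - ξ j)^2 else 0) := by
    rw [Finset.sum_comm]
    refine Finset.sum_congr rfl fun i _ => Finset.sum_congr rfl fun j _ => ?_
    rcases lt_or_ge i j with h | h
    · simp [h]; ring
    · simp [not_lt.mpr h]
  have htotal : ∑ i : Fin s, ∑ j : Fin s, (ξ i - ξ j)^2
      = 2 * ∑ i : Fin s, ∑ j : Fin s, (if i < j then (ξ i - ξ j)^2 else 0) := by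
    have hsplit : ∀ i j : Fin s, (ξ i - ξ j)^2
        = (if i < j then (ξ i - ξ j)^2 else 0) + (if j < i then (ξ i - ξ j)^2 else 0) := by
      intro i j
      rcases lt_trichotomy i j with h | h | h
      · simp [h, asymm h]
      · subst h; simp
      · simp [h, asymm h]
    calc ∑ i : Fin s, ∑ j : Fin s, (ξ i - ξ j)^2
        = ∑ i : Fin s, ∑ j : Fin s,
            ((if i < j then (ξ i - ξ j)^2 else 0) + (if j < i then (ξ i - ξ j)^2 else 0)) :=
          Finset.sum_congr rfl fun i _ => Finset.sum_congr rfl fun j _ => hsplit i j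
      _ = (∑ i : Fin s, ∑ j : Fin s, (if i < j then (ξ i - ξ j)^2 else 0))
            + ∑ i : Fin s, ∑ j : Fin s, (if j < i then (ξ i - ξ j)^2 else 0) := by
          simp [Finset.sum_add_distrib]
      _ = 2 * ∑ i : Fin s, ∑ j : Fin s, (if i < j then (ξ i - ξ j)^2 else 0) := by
          rw [hswap]; ring
  have inner : ∀ i : Fin s, ∑ j : Fin s, (ξ i - ξ j)^2
      = s * ξ i ^ 2 - 2 * ξ i * (∑ j, ξ j) + ∑ j, (ξ j)^2 := by
    intro i
    have h1 : ∀ j : Fin s, (ξ i - ξ j)^2 = ξ i^2 - 2 * ξ i * ξ j + ξ j^2 := fun j => by ring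
    rw [Finset.sum_congr rfl fun j _ => h1 j, Finset.sum_add_distrib, Finset.sum_sub_distrib,
      Finset.sum_const, Finset.card_univ, Fintype.card_fin, nsmul_eq_mul, ← Finset.mul_sum]
  have hexp : ∑ i : Fin s, ∑ j : Fin s, (ξ i - ξ j)^2
      = 2 * s * (∑ i, (ξ i)^2) - 2 * (∑ i, ξ i)^2 := by
    rw [Finset.sum_congr rfl fun i _ => inner i, Finset.sum_add_distrib, Finset.sum_sub_distrib,
      Finset.sum_const, Finset.card_univ, Fintype.card_fin, nsmul_eq_mul, ← Finset.mul_sum,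
      ← Finset.sum_mul, ← Finset.mul_sum]
    ring
  rw [htotal] at hexp
  linarith

/-- if `M⋆ + M⋆ᵀ` is positive semidefinite of rank `s - 1`, then there is a
constant `C > 0` with `ξᵀ M⋆ ξ ≥ C · Σ_{i<j} (ξᵢ - ξⱼ)²` for all `ξ ∈ ℝˢ`. -/
theorem stmt0 {s : ℕ} (hs : 2 ≤ s) (M : Matrix (Fin s) (Fin s) ℝ)
    (hpsd : (Mstar M + (Mstar M)ᵀ).PosSemidef)
    (hrank : (Mstar M + (Mstar M)ᵀ).rank = s - 1) :
    ∃ C > (0 : ℝ), ∀ ξ : Fin s → ℝ,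
      ξ ⬝ᵥ (Mstar M).mulVec ξ ≥
        C * ∑ i : Fin s, ∑ j : Fin s, (if i < j then (ξ i - ξ j) ^ 2 else 0) := by
  set A := Mstar M + (Mstar M)ᵀ with hA
  have hAsym : Aᵀ = A := by
    rw [hA, transpose_add, transpose_transpose, add_comm]
  have hAsym' : ∀ i j, A i j = A j i := fun i j => by
    conv_lhs => rw [← hAsym]
    rw [transpose_apply]
  set e : Fin s → ℝ := fun _ => 1 with he
  -- total sum of Mstar is zero
  have hMT : ∀ i : Fin s, ∑ j, (M * Tmat s) i j = 0 := by
    intro i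
    simp only [mul_apply]
    rw [Finset.sum_comm]
    simp [← Finset.mul_sum, Tmat_rowsum]
  have hMssum : ∑ i : Fin s, ∑ j : Fin s, Mstar M i j = 0 := by
    unfold Mstar
    simp only [Matrix.add_apply]
    simp [Finset.sum_add_distrib, hMT, Smat_totsum hs]
  -- e is in the kernel
  have hqe : e ⬝ᵥ A *ᵥ e = 0 := by
    have h1 : e ⬝ᵥ A *ᵥ e = ∑ i : Fin s, ∑ j : Fin s, A i j := by
      simp [dotProduct, mulVec, he]
    rw [h1, hA]
    simp only [Matrix.add_apply, transpose_apply]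
    rw [Finset.sum_congr rfl fun i (_ : i ∈ Finset.univ) =>
      Finset.sum_add_distrib (f := fun j => Mstar M i j) (g := fun j => Mstar M j i),
      Finset.sum_add_distrib, hMssum, Finset.sum_comm, hMssum]
    ring
  have hAe : A *ᵥ e = 0 := by
    rw [← hpsd.dotProduct_mulVec_zero_iff e]
    simpa using hqe
  -- the kernel is exactly the span of e
  have hene : e ≠ 0 := by
    intro h
    have := congrFun h ⟨0, by omega⟩
    simp [he] at this
  have hdim : Module.finrank ℝ (LinearMap.ker A.mulVecLin) = 1 := by
    have h1 : A.rank + Module.finrank ℝ (LinearMap.ker A.mulVecLin) = s := by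
      have := LinearMap.finrank_range_add_finrank_ker A.mulVecLin
      simpa [Matrix.rank] using this
    omega
  have hker : LinearMap.ker A.mulVecLin = Submodule.span ℝ {e} := by
    symm
    apply Submodule.eq_of_le_of_finrank_eq
    · rw [Submodule.span_singleton_le_iff_mem]
      simpa [LinearMap.mem_ker] using hAe
    · rw [finrank_span_singleton hene, hdim]
  -- compactness argument
  set K : Set (Fin s → ℝ) := {x | (∑ i, x i) = 0 ∧ (∑ i, (x i)^2) = 1} with hK
  have hKc : IsCompact K := by
    have hclosed : IsClosed K := by
      have h1 : IsClosed {x : Fin s → ℝ | (∑ i, x i) = 0} :=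
        isClosed_eq (continuous_finset_sum _ fun i _ => continuous_apply i) continuous_const
      have h2 : IsClosed {x : Fin s → ℝ | (∑ i, (x i)^2) = 1} :=
        isClosed_eq (continuous_finset_sum _ fun i _ => (continuous_apply i).pow 2)
          continuous_const
      exact h1.inter h2
    have hsub : K ⊆ Metric.closedBall 0 1 := by
      intro x hx
      rw [Metric.mem_closedBall, dist_zero_right]
      rw [pi_norm_le_iff_of_nonneg zero_le_one]
      intro i
      have hle : (x i)^2 ≤ 1 := by
        have := Finset.single_le_sum (f := fun i => (x i)^2) (fun j _ => sq_nonneg _)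
          (Finset.mem_univ i)
        rw [hx.2] at this
        exact this
      rw [Real.norm_eq_abs]
      nlinarith [sq_abs (x i), abs_nonneg (x i)]
    exact Metric.isCompact_of_isClosed_isBounded hclosed
      (Metric.isBounded_closedBall.subset hsub)
  have hKne : K.Nonempty := by
    have h0 : (0 : ℕ) < s := by omega
    have h1 : (1 : ℕ) < s := by omega
    set c : ℝ := (Real.sqrt 2)⁻¹ with hc
    have hc2 : c^2 = 1/2 := by
      rw [hc, inv_pow, Real.sq_sqrt (by norm_num : (0:ℝ) ≤ 2)]
      norm_num
    refine ⟨fun i => if i = ⟨0, h0⟩ then c else if i = ⟨1, h1⟩ then -c else 0, ?_, ?_⟩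
    · have key : ∀ i : Fin s, (if i = ⟨0, h0⟩ then c else if i = ⟨1, h1⟩ then -c else 0)
          = (if i = ⟨0, h0⟩ then c else 0) + (if i = ⟨1, h1⟩ then -c else 0) := by
        intro i
        rcases eq_or_ne i (⟨0, h0⟩ : Fin s) with rfl | hi0
        · simp [Fin.ext_iff]
        · simp [hi0]
      rw [Finset.sum_congr rfl fun i _ => key i, Finset.sum_add_distrib]
      simp
    · have key : ∀ i : Fin s,
          ((if i = ⟨0, h0⟩ then c else if i = ⟨1, h1⟩ then -c else 0))^2
            = (if i = ⟨0, h0⟩ then c^2 else 0) + (if i = ⟨1, h1⟩ then c^2 else 0) := by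
        intro i
        rcases eq_or_ne i (⟨0, h0⟩ : Fin s) with rfl | hi0
        · simp [Fin.ext_iff]
        · rcases eq_or_ne i (⟨1, h1⟩ : Fin s) with rfl | hi1
          · simp [hi0]
          · simp [hi0, hi1]
      rw [Finset.sum_congr rfl fun i _ => key i, Finset.sum_add_distrib]
      simp [hc2]
      norm_num
  -- minimize the quadratic form on K
  have hfc : Continuous fun x : Fin s → ℝ => x ⬝ᵥ A *ᵥ x := by
    show Continuous fun x : Fin s → ℝ => ∑ i, x i * ∑ j, A i j * x j
    exact continuous_finset_sum _ fun i _ => (continuous_apply i).mul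
      (continuous_finset_sum _ fun j _ => continuous_const.mul (continuous_apply j))
  obtain ⟨x₀, hx₀K, hmin⟩ := hKc.exists_isMinOn hKne hfc.continuousOn
  set m := x₀ ⬝ᵥ A *ᵥ x₀ with hm
  have hm0 : 0 < m := by
    have hnn : 0 ≤ m := by simpa using hpsd.dotProduct_mulVec_nonneg x₀
    rcases hnn.lt_or_eq with h | h
    · exact h
    · exfalso
      have hAx : A *ᵥ x₀ = 0 := by
        rw [← hpsd.dotProduct_mulVec_zero_iff x₀]
        simpa using h.symm
      have hx₀mem : x₀ ∈ Submodule.span ℝ {e} := by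
        rw [← hker]
        simpa [LinearMap.mem_ker] using hAx
      obtain ⟨c, hc⟩ := Submodule.mem_span_singleton.mp hx₀mem
      have hsum := hx₀K.1
      rw [← hc] at hsum
      have hcs : c * (s:ℝ) = 0 := by
        simpa [he, smul_eq_mul, Finset.sum_const, Finset.card_univ, nsmul_eq_mul,
          mul_comm] using hsum
      have hsne : (s:ℝ) ≠ 0 := by
        have : (0:ℕ) < s := by omega
        exact_mod_cast this.ne'
      have hc0 : c = 0 := by
        rcases mul_eq_zero.mp hcs with h' | h'
        · exact h'
        · exact absurd h' hsne
      rw [← hc, hc0, zero_smul] at hx₀K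
      have := hx₀K.2
      simp at this
  -- key inequality for mean-zero vectors
  have key : ∀ x : Fin s → ℝ, (∑ i, x i) = 0 → x ⬝ᵥ A *ᵥ x ≥ m * ∑ i, (x i)^2 := by
    intro x hx
    rcases eq_or_ne (∑ i, (x i)^2) 0 with h0 | h0
    · have hx0 : x = 0 := by
        funext i
        have := (Finset.sum_eq_zero_iff_of_nonneg (fun j _ => sq_nonneg (x j))).mp h0 i
          (Finset.mem_univ i)
        exact pow_eq_zero_iff (n := 2) (by norm_num) |>.mp this
      simp [hx0, h0]
    · have hpos : 0 < ∑ i, (x i)^2 :=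
        lt_of_le_of_ne (Finset.sum_nonneg fun i _ => sq_nonneg _) (Ne.symm h0)
      set r := Real.sqrt (∑ i, (x i)^2) with hr
      have hrpos : 0 < r := Real.sqrt_pos.mpr hpos
      have hr2 : r^2 = ∑ i, (x i)^2 := Real.sq_sqrt hpos.le
      set y : Fin s → ℝ := r⁻¹ • x with hy
      have hyK : y ∈ K := by
        constructor
        · simp [hy, Pi.smul_apply, smul_eq_mul, ← Finset.mul_sum, hx]
        · have : ∑ i, (y i)^2 = r⁻¹^2 * ∑ i, (x i)^2 := by
            simp [hy, Pi.smul_apply, smul_eq_mul, mul_pow, Finset.mul_sum]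
          rw [this, ← hr2]
          field_simp
      have hxy : x = r • y := by
        rw [hy, smul_smul, mul_inv_cancel₀ hrpos.ne', one_smul]
      have hq : x ⬝ᵥ A *ᵥ x = r^2 * (y ⬝ᵥ A *ᵥ y) := by
        rw [hxy, mulVec_smul, smul_dotProduct, dotProduct_smul, smul_eq_mul, smul_eq_mul]
        ring
      have hge : y ⬝ᵥ A *ᵥ y ≥ m := hmin hyK
      rw [hq, ← hr2]
      nlinarith [sq_nonneg r]
  -- conclude
  have hs0 : (0:ℝ) < s := by positivity
  refine ⟨m / (2 * s), by positivity, ?_⟩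
  intro ξ
  set E1 := ∑ i, ξ i with hE1
  set x : Fin s → ℝ := fun i => ξ i - E1 / s with hx
  have hxsum : ∑ i, x i = 0 := by
    rw [hx]
    simp only [Finset.sum_sub_distrib, Finset.sum_const, Finset.card_univ, Fintype.card_fin,
      nsmul_eq_mul]
    field_simp
    simp [hE1]
  have hdiff : ∀ i j, ξ i - ξ j = x i - x j := fun i j => by simp [hx]
  have hRHS : ∑ i : Fin s, ∑ j : Fin s, (if i < j then (ξ i - ξ j) ^ 2 else 0)
      = s * ∑ i, (x i)^2 := by
    have h1 : ∑ i : Fin s, ∑ j : Fin s, (if i < j then (ξ i - ξ j) ^ 2 else 0)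
        = ∑ i : Fin s, ∑ j : Fin s, (if i < j then (x i - x j) ^ 2 else 0) := by
      refine Finset.sum_congr rfl fun i _ => Finset.sum_congr rfl fun j _ => ?_
      rw [hdiff i j]
    rw [h1, pair_sum, hxsum]
    ring
  -- ξ ⬝ᵥ A ξ = x ⬝ᵥ A x
  have hrow : ∀ i, ∑ j, A i j = 0 := by
    intro i
    have := congrFun hAe i
    simpa [mulVec, dotProduct, he] using this
  have heAx : ∀ z : Fin s → ℝ, e ⬝ᵥ A *ᵥ z = 0 := by
    intro z
    simp only [dotProduct, mulVec, dotProduct, he, one_mul]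
    rw [Finset.sum_comm]
    refine Finset.sum_eq_zero fun j _ => ?_
    rw [← Finset.sum_mul]
    have : ∑ i, A i j = 0 := by
      rw [Finset.sum_congr rfl fun i _ => hAsym' i j, hrow]
    rw [this, zero_mul]
  have hxplus : ξ = x + (E1 / s) • e := by
    funext i
    simp [hx, he, smul_eq_mul]
  have hqx : ξ ⬝ᵥ A *ᵥ ξ = x ⬝ᵥ A *ᵥ x := by
    rw [hxplus, mulVec_add, mulVec_smul, hAe, smul_zero, add_zero, add_dotProduct,
      smul_dotProduct]
    have hd : e ⬝ᵥ A *ᵥ x = 0 := heAx x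
    rw [hd, smul_zero, add_zero]
  have hhalf : ξ ⬝ᵥ (Mstar M) *ᵥ ξ = (1/2) * (ξ ⬝ᵥ A *ᵥ ξ) := by
    rw [hA, add_mulVec, dotProduct_add, quad_transpose]
    ring
  have hkey := key x hxsum
  rw [ge_iff_le, hRHS, hhalf, hqx]
  have hsum_nonneg : 0 ≤ ∑ i, (x i)^2 := Finset.sum_nonneg fun i _ => sq_nonneg _
  rw [div_mul_eq_mul_div, div_mul_eq_mul_div, div_le_iff₀ (by positivity)]
  nlinarith [hkey, hsum_nonneg, hm0]
end

section
/- Let s ≥ 2, let H ∈ ℝ^{s×s} have a one-dimensional null space spanned by a vector v ∈ ℝˢ whose last component v_s is zero, and let M ∈ ℝ^{s×s} be such that M·H + (M·H)ᵀ is positive semidefinite and has rank s−1. Then there exists a constant C > 0 such that for every ξ = (ξ₁,…,ξ_s) ∈ ℝˢ one has ξᵀ M H ξ ≥ C · ξ_s². -/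
open Matrix BigOperators

/-- if `H` has a one-dimensional null space spanned by a vector `v` whose last
component vanishes, and `M·H + (M·H)ᵀ` is positive semidefinite of rank `s - 1`, then there is
`C > 0` with `ξᵀ M H ξ ≥ C ξ_s²` for all `ξ`. -/
theorem stmt1 {s : ℕ} (hs : 2 ≤ s) (H M : Matrix (Fin s) (Fin s) ℝ)
    (v : Fin s → ℝ) (hv : v ≠ 0)
    (hnull : ∀ x : Fin s → ℝ, H.mulVec x = 0 ↔ ∃ c : ℝ, x = c • v)
    (hvs : v ⟨s - 1, by omega⟩ = 0)
    (hpsd : (M * H + (M * H)ᵀ).PosSemidef)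
    (hrank : (M * H + (M * H)ᵀ).rank = s - 1) :
    ∃ C > (0 : ℝ), ∀ ξ : Fin s → ℝ,
      ξ ⬝ᵥ (M * H).mulVec ξ ≥ C * (ξ ⟨s - 1, by omega⟩) ^ 2 := by
  set A : Matrix (Fin s) (Fin s) ℝ := M * H + (M * H)ᵀ with hA
  have hAsymm : Aᵀ = A := by
    simp [hA, transpose_add, add_comm]
  -- v is in the kernel of A
  have hHv : H.mulVec v = 0 := (hnull v).mpr ⟨1, by simp⟩
  have hMHv : (M * H).mulVec v = 0 := by
    rw [← mulVec_mulVec, hHv, mulVec_zero]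
  have hvAv : v ⬝ᵥ A.mulVec v = 0 := by
    rw [hA, add_mulVec, dotProduct_add, hMHv, dotProduct_zero, zero_add,
      dotProduct_mulVec, vecMul_transpose, hMHv, zero_dotProduct]
  have hAv : A.mulVec v = 0 := by
    have := (hpsd.dotProduct_mulVec_zero_iff v).mp (by simpa using hvAv)
    simpa using this
  -- the kernel of A is exactly the span of v
  have hvv : v ⬝ᵥ v ≠ 0 := fun h => hv (dotProduct_self_eq_zero.mp h)
  have hkerfin : Module.finrank ℝ ↥(LinearMap.ker A.mulVecLin) = 1 := by
    have h1 := LinearMap.finrank_range_add_finrank_ker A.mulVecLin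
    have h2 : Module.finrank ℝ (LinearMap.range A.mulVecLin) = s - 1 := hrank
    have h3 : Module.finrank ℝ (Fin s → ℝ) = s := by simp
    omega
  have hkereq : Submodule.span ℝ {v} = LinearMap.ker A.mulVecLin := by
    apply Submodule.eq_of_le_of_finrank_eq
    · rw [Submodule.span_le, Set.singleton_subset_iff]
      exact hAv
    · rw [finrank_span_singleton hv, hkerfin]
  have hker : ∀ x : Fin s → ℝ, A.mulVec x = 0 → ∃ c : ℝ, x = c • v := by
    intro x hx
    have : x ∈ Submodule.span ℝ ({v} : Set (Fin s → ℝ)) := hkereq ▸ hx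
    obtain ⟨c, hc⟩ := Submodule.mem_span_singleton.mp this
    exact ⟨c, hc.symm⟩
  -- minimize the auxiliary quadratic form on the unit sphere
  haveI : Nonempty (Fin s) := ⟨⟨0, by omega⟩⟩
  set E := EuclideanSpace ℝ (Fin s)
  set g : E → ℝ := fun x => x ⬝ᵥ A.mulVec x + (v ⬝ᵥ x) ^ 2 with hg
  have hgcont : Continuous g := by
    have h1 : Continuous fun x : E => x ⬝ᵥ A.mulVec x := by
      show Continuous fun x : E => ∑ i, x i * ∑ j, A i j * x j
      apply continuous_finset_sum
      intro i _
      exact ((continuous_apply i).comp (PiLp.continuous_ofLp (p := 2) (β := fun _ : Fin s => ℝ))).mul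
        (continuous_finset_sum _ fun j _ => (continuous_const.mul ((continuous_apply j).comp (PiLp.continuous_ofLp (p := 2) (β := fun _ : Fin s => ℝ)))))
    have h2 : Continuous fun x : E => (v ⬝ᵥ x) ^ 2 := by
      show Continuous fun x : E => (∑ j, v j * x j) ^ 2
      exact (continuous_finset_sum _ fun j _ =>
        (continuous_const.mul ((continuous_apply j).comp (PiLp.continuous_ofLp (p := 2) (β := fun _ : Fin s => ℝ))))).pow 2
    exact h1.add h2
  have hsph : (Metric.sphere (0 : E) 1).Nonempty :=
    NormedSpace.sphere_nonempty.mpr zero_le_one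
  obtain ⟨x₀, hx₀mem, hx₀min⟩ :=
    (isCompact_sphere (0 : E) 1).exists_isMinOn hsph hgcont.continuousOn
  set C : ℝ := g x₀ with hC
  clear_value C
  have hx₀norm : ‖x₀‖ = 1 := mem_sphere_zero_iff_norm.mp hx₀mem
  -- C > 0
  have hCpos : 0 < C := by
    have hnn : (0:ℝ) ≤ C := by
      have h2 : (0:ℝ) ≤ x₀ ⬝ᵥ A.mulVec x₀ := by simpa using hpsd.dotProduct_mulVec_nonneg x₀.ofLp
      have h3 : (0:ℝ) ≤ (v ⬝ᵥ x₀) ^ 2 := sq_nonneg _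
      rw [hC, hg]
      exact add_nonneg h2 h3
    rcases lt_or_eq_of_le hnn with h | h
    · exact h
    · exfalso
      have h2 : (0:ℝ) ≤ x₀ ⬝ᵥ A.mulVec x₀ := by simpa using hpsd.dotProduct_mulVec_nonneg x₀.ofLp
      have h3 : (0:ℝ) ≤ (v ⬝ᵥ x₀) ^ 2 := sq_nonneg _
      have hq : x₀ ⬝ᵥ A.mulVec x₀ = 0 := by
        have := h.symm; simp only [hC, hg] at this; linarith
      have hp : (v ⬝ᵥ x₀) = 0 := by
        have : (v ⬝ᵥ x₀) ^ 2 = 0 := by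
          have := h.symm; simp only [hC, hg] at this; linarith
        exact pow_eq_zero_iff (by norm_num) |>.mp this
      have hAx₀ : A.mulVec x₀ = 0 := by
        have := (hpsd.dotProduct_mulVec_zero_iff x₀).mp (by simpa using hq)
        simpa using this
      obtain ⟨c, hc⟩ := hker x₀ hAx₀
      have : v ⬝ᵥ (c • v) = 0 := by rw [← hc]; exact hp
      have hc0 : c = 0 := by
        rw [dotProduct_smul, smul_eq_mul] at this
        rcases mul_eq_zero.mp this with h | h
        · exact h
        · exact absurd h hvv
      have : x₀ = 0 := WithLp.ofLp_injective 2 (by rw [hc, hc0, zero_smul]; rfl)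
      rw [this] at hx₀norm
      simp at hx₀norm
  -- homogeneous lower bound
  have hbound : ∀ x : Fin s → ℝ, C * (x ⬝ᵥ x) ≤ x ⬝ᵥ A.mulVec x + (v ⬝ᵥ x) ^ 2 := by
    intro x
    rcases eq_or_ne x 0 with rfl | hx
    · simp
    · have ht : 0 < x ⬝ᵥ x := by
        rcases lt_or_eq_of_le (Finset.sum_nonneg fun i _ => mul_self_nonneg (x i)) with h | h
        · exact h
        · exact absurd (dotProduct_self_eq_zero.mp h.symm) hx
      set r : ℝ := Real.sqrt (x ⬝ᵥ x) with hr
      have hrpos : 0 < r := Real.sqrt_pos.mpr ht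
      have hr2 : r ^ 2 = x ⬝ᵥ x := Real.sq_sqrt ht.le
      set y : E := r⁻¹ • (WithLp.toLp 2 x) with hy
      have hymem : y ∈ Metric.sphere (0 : E) 1 := by
        rw [mem_sphere_zero_iff_norm, hy, norm_smul, EuclideanSpace.norm_eq]
        have : ∑ i, ‖(WithLp.toLp 2 x) i‖ ^ 2 = x ⬝ᵥ x := by
          simp [dotProduct, Real.norm_eq_abs, sq_abs, pow_two]
        rw [this, ← hr, Real.norm_eq_abs, abs_inv, abs_of_pos hrpos,
          inv_mul_cancel₀ hrpos.ne']
      have hCy : C ≤ g y := by rw [hC]; exact hx₀min hymem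
      have hgy : g y = r⁻¹ ^ 2 * (x ⬝ᵥ A.mulVec x + (v ⬝ᵥ x) ^ 2) := by
        have hy' : (y : Fin s → ℝ) = r⁻¹ • x := rfl
        simp only [hg, hy', mulVec_smul, smul_dotProduct, dotProduct_smul, smul_eq_mul]
        ring
      rw [hgy] at hCy
      have h4 : C * r ^ 2 ≤ x ⬝ᵥ A.mulVec x + (v ⬝ᵥ x) ^ 2 := by
        have hr2pos : 0 < r ^ 2 := by positivity
        calc C * r ^ 2 ≤ (r⁻¹ ^ 2 * (x ⬝ᵥ A.mulVec x + (v ⬝ᵥ x) ^ 2)) * r ^ 2 := by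
              exact mul_le_mul_of_nonneg_right hCy hr2pos.le
          _ = x ⬝ᵥ A.mulVec x + (v ⬝ᵥ x) ^ 2 := by
              field_simp
      rw [← hr2]; exact h4
  -- assemble
  refine ⟨C / 2, half_pos hCpos, fun ξ => ?_⟩
  set i₀ : Fin s := ⟨s - 1, by omega⟩ with hi₀
  set c : ℝ := (v ⬝ᵥ ξ) / (v ⬝ᵥ v) with hc
  set w : Fin s → ℝ := ξ - c • v with hw
  have hvw : v ⬝ᵥ w = 0 := by
    simp only [hw, dotProduct_sub, dotProduct_smul, smul_eq_mul, hc]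
    field_simp
    ring
  have hvA : ∀ u : Fin s → ℝ, v ⬝ᵥ A.mulVec u = 0 := by
    intro u
    rw [dotProduct_mulVec, ← hAsymm, vecMul_transpose, hAv, zero_dotProduct]
  have hAvu : ∀ u : Fin s → ℝ, u ⬝ᵥ A.mulVec v = 0 := by
    intro u
    rw [hAv, dotProduct_zero]
  have hQ : ξ ⬝ᵥ A.mulVec ξ = w ⬝ᵥ A.mulVec w := by
    have hξ : ξ = w + c • v := by rw [hw]; abel
    have e1 : A.mulVec (c • v) = 0 := by rw [mulVec_smul, hAv, smul_zero]
    rw [hξ, mulVec_add, e1, add_zero, add_dotProduct, smul_dotProduct, hvA w]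
    simp
  have hwbound := hbound w
  rw [hvw] at hwbound
  have hws : w i₀ = ξ i₀ := by
    simp [hw, hvs]
  have hwi : w i₀ * w i₀ ≤ w ⬝ᵥ w := by
    exact Finset.single_le_sum (fun i _ => mul_self_nonneg (w i)) (Finset.mem_univ i₀)
  have hQge : C * (ξ i₀) ^ 2 ≤ ξ ⬝ᵥ A.mulVec ξ := by
    have h2 : C * (w ⬝ᵥ w) ≤ w ⬝ᵥ A.mulVec w := by
      have h0 : (0:ℝ) ^ 2 = 0 := by norm_num
      linarith [hwbound, h0]
    rw [hQ, ← hws, sq]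
    calc C * (w i₀ * w i₀) ≤ C * (w ⬝ᵥ w) :=
          mul_le_mul_of_nonneg_left hwi hCpos.le
      _ ≤ w ⬝ᵥ A.mulVec w := h2
  -- relate ξᵀAξ to 2 ξᵀ(MH)ξ
  have hdouble : ξ ⬝ᵥ A.mulVec ξ = 2 * (ξ ⬝ᵥ (M * H).mulVec ξ) := by
    rw [hA, add_mulVec, dotProduct_add]
    have : ξ ⬝ᵥ (M * H)ᵀ.mulVec ξ = ξ ⬝ᵥ (M * H).mulVec ξ := by
      rw [dotProduct_mulVec, vecMul_transpose, dotProduct_comm]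
    rw [this]; ring
  have : C * (ξ i₀) ^ 2 ≤ 2 * (ξ ⬝ᵥ (M * H).mulVec ξ) := hdouble ▸ hQge
  calc ξ ⬝ᵥ (M * H).mulVec ξ ≥ C * (ξ i₀) ^ 2 / 2 := by linarith
    _ = C / 2 * (ξ i₀) ^ 2 := by ring
end

section
/- Let A₀ ∈ ℝ^{m×m} be symmetric positive definite, let N ∈ ℝ^{s×s}, and let c > 0 satisfy ξᵀ N ξ ≥ c · Σ_{1≤i<j≤s} (ξᵢ − ξⱼ)² for all ξ ∈ ℝˢ. Then there exists c′ > 0 such that for all vectors u₁, …, u_m ∈ ℝˢ one has Σ_{j,k=1}^{m} (A₀)_{jk} uⱼᵀ N uₖ ≥ c′ · Σ_{l=1}^{m} Σ_{1≤i<j≤s} (u_{l,i} − u_{l,j})², where u_{l,i} denotes the i-th component of uₗ. -/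
open Matrix BigOperators

private lemma pairsum_nonneg {s : ℕ} (ξ : Fin s → ℝ) :
    0 ≤ ∑ i : Fin s, ∑ j : Fin s, (if i < j then (ξ i - ξ j) ^ 2 else 0) := by
  refine Finset.sum_nonneg fun i _ => Finset.sum_nonneg fun j _ => ?_
  split <;> positivity

private lemma dp_sum_sum {n ι κ : Type*} [Fintype n] (t : Finset ι) (r : Finset κ)
    (f : ι → n → ℝ) (g : κ → n → ℝ) :
    (∑ j ∈ t, f j) ⬝ᵥ (∑ k ∈ r, g k) = ∑ j ∈ t, ∑ k ∈ r, (f j ⬝ᵥ g k) := by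
  simp only [dotProduct, Finset.sum_apply, Finset.sum_mul, Finset.mul_sum]
  calc ∑ i : n, ∑ k ∈ r, ∑ j ∈ t, f j i * g k i
      = ∑ k ∈ r, ∑ i : n, ∑ j ∈ t, f j i * g k i := Finset.sum_comm
    _ = ∑ k ∈ r, ∑ j ∈ t, ∑ i : n, f j i * g k i :=
        Finset.sum_congr rfl fun k _ => Finset.sum_comm
    _ = ∑ j ∈ t, ∑ k ∈ r, ∑ i : n, f j i * g k i := Finset.sum_comm

private lemma triple_swap {m : ℕ} (F : Fin m → Fin m → Fin m → ℝ) :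
    ∑ j : Fin m, ∑ k : Fin m, ∑ l : Fin m, F j k l
      = ∑ l : Fin m, ∑ j : Fin m, ∑ k : Fin m, F j k l := by
  rw [show (∑ j : Fin m, ∑ k : Fin m, ∑ l : Fin m, F j k l)
      = ∑ j : Fin m, ∑ l : Fin m, ∑ k : Fin m, F j k l from
    Finset.sum_congr rfl fun j _ => Finset.sum_comm]
  exact Finset.sum_comm

/-- if `A₀` is symmetric positive definite and the quadratic form of `N` is
coercive over pairwise differences, then the `A₀`-weighted sum of the quadratic forms is also
coercive over all pairwise differences of the vectors `u₁, …, u_m`. -/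
theorem stmt3 {m s : ℕ} (A0 : Matrix (Fin m) (Fin m) ℝ) (hA0 : A0.PosDef)
    (N : Matrix (Fin s) (Fin s) ℝ) (c : ℝ) (hc : 0 < c)
    (hN : ∀ ξ : Fin s → ℝ,
      ξ ⬝ᵥ N.mulVec ξ ≥ c * ∑ i : Fin s, ∑ j : Fin s, (if i < j then (ξ i - ξ j) ^ 2 else 0)) :
    ∃ c' > (0 : ℝ), ∀ u : Fin m → Fin s → ℝ,
      (∑ j : Fin m, ∑ k : Fin m, A0 j k * (u j ⬝ᵥ N.mulVec (u k))) ≥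
        c' * ∑ l : Fin m, ∑ i : Fin s, ∑ j : Fin s,
          (if i < j then (u l i - u l j) ^ 2 else 0) := by
  rcases Nat.eq_zero_or_pos m with hm | hm
  · refine ⟨1, one_pos, fun u => ?_⟩
    subst hm
    simp
  have hne : (Finset.univ : Finset (Fin m)).Nonempty := ⟨⟨0, hm⟩, Finset.mem_univ _⟩
  -- minimal eigenvalue
  obtain ⟨i₀, -, hmin⟩ := Finset.exists_min_image Finset.univ hA0.1.eigenvalues hne
  set μ := hA0.1.eigenvalues i₀ with hμdef
  have hμ : 0 < μ := hA0.eigenvalues_pos i₀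
  -- A0 - μ • 1 is positive semidefinite
  have hPSD : (A0 - μ • 1).PosSemidef := by
    set U : Matrix (Fin m) (Fin m) ℝ := (hA0.1.eigenvectorUnitary : Matrix (Fin m) (Fin m) ℝ)
    have hU : U * star U = 1 := (Matrix.mem_unitaryGroup_iff).mp hA0.1.eigenvectorUnitary.2
    have key : A0 - μ • 1 = U * diagonal (fun i => hA0.1.eigenvalues i - μ) * star U := by
      have h1 : diagonal (fun i => hA0.1.eigenvalues i - μ)
          = diagonal (RCLike.ofReal ∘ hA0.1.eigenvalues) - μ • (1 : Matrix (Fin m) (Fin m) ℝ) := by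
        ext i j
        rcases eq_or_ne i j with rfl | h
        · simp [Matrix.diagonal_apply_eq, Matrix.one_apply_eq]
        · simp [Matrix.diagonal_apply_ne _ h, Matrix.one_apply_ne h]
      rw [h1, Matrix.mul_sub, Matrix.sub_mul, Matrix.mul_smul, Matrix.smul_mul, Matrix.mul_one,
        hU]
      conv_lhs => rw [hA0.1.spectral_theorem]
      rfl
    rw [key]
    exact (Matrix.posSemidef_diagonal_iff.mpr fun i => sub_nonneg.mpr
      (hmin i (Finset.mem_univ i))).mul_mul_conjTranspose_same _
  obtain ⟨B, hB⟩ : ∃ B : Matrix (Fin m) (Fin m) ℝ, A0 - μ • 1 = Bᴴ * B := by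
    open scoped MatrixOrder Matrix.Norms.L2Operator in
    exact CStarAlgebra.nonneg_iff_eq_star_mul_self.mp (Matrix.nonneg_iff_posSemidef.mpr hPSD)
  refine ⟨μ * c, mul_pos hμ hc, fun u => ?_⟩
  -- the "rotated" vectors
  set v : Fin m → Fin s → ℝ := fun l => ∑ j : Fin m, B l j • u j with hv
  have expand : ∀ l : Fin m,
      (v l ⬝ᵥ N.mulVec (v l))
        = ∑ j : Fin m, ∑ k : Fin m, B l j * B l k * (u j ⬝ᵥ N.mulVec (u k)) := by
    intro l
    have hmv : N.mulVec (v l) = ∑ k : Fin m, B l k • N.mulVec (u k) := by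
      rw [hv]
      simp only [← Matrix.mulVecLin_apply, map_sum, _root_.map_smul]
    rw [hv, hmv, dp_sum_sum]
    refine Finset.sum_congr rfl fun j _ => Finset.sum_congr rfl fun k _ => ?_
    simp only [smul_dotProduct, dotProduct_smul, smul_eq_mul]
    ring
  -- split the quadratic form
  have hsplit : (∑ j : Fin m, ∑ k : Fin m, A0 j k * (u j ⬝ᵥ N.mulVec (u k)))
      = (∑ l : Fin m, (v l ⬝ᵥ N.mulVec (v l)))
        + μ * ∑ j : Fin m, (u j ⬝ᵥ N.mulVec (u j)) := by
    have hA0eq : ∀ j k, A0 j k = (∑ l : Fin m, B l j * B l k) + μ * (if j = k then 1 else 0) := by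
      intro j k
      have h := congrFun (congrFun hB j) k
      simp only [Matrix.sub_apply, Matrix.smul_apply, Matrix.one_apply, Matrix.mul_apply,
        Matrix.conjTranspose_apply, star_trivial, smul_eq_mul] at h
      linarith [h]
    calc ∑ j : Fin m, ∑ k : Fin m, A0 j k * (u j ⬝ᵥ N.mulVec (u k))
        = ∑ j : Fin m, ∑ k : Fin m,
            ((∑ l : Fin m, B l j * B l k * (u j ⬝ᵥ N.mulVec (u k)))
              + μ * (if j = k then u j ⬝ᵥ N.mulVec (u k) else 0)) := by
          refine Finset.sum_congr rfl fun j _ => Finset.sum_congr rfl fun k _ => ?_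
          rw [hA0eq j k, add_mul, Finset.sum_mul]
          congr 1
          by_cases h : j = k <;> simp [h]
      _ = (∑ j : Fin m, ∑ k : Fin m, ∑ l : Fin m, B l j * B l k * (u j ⬝ᵥ N.mulVec (u k)))
            + μ * ∑ j : Fin m, (u j ⬝ᵥ N.mulVec (u j)) := by
          simp only [Finset.sum_add_distrib, ← Finset.mul_sum, Finset.sum_ite_eq,
            Finset.mem_univ, if_true]
      _ = (∑ l : Fin m, (v l ⬝ᵥ N.mulVec (v l)))
            + μ * ∑ j : Fin m, (u j ⬝ᵥ N.mulVec (u j)) := by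
          rw [triple_swap]
          congr 1
          exact Finset.sum_congr rfl fun l _ => (expand l).symm
  have h1 : 0 ≤ ∑ l : Fin m, (v l ⬝ᵥ N.mulVec (v l)) :=
    Finset.sum_nonneg fun l _ =>
      le_trans (mul_nonneg hc.le (pairsum_nonneg (v l))) (hN (v l))
  have h2 : c * ∑ l : Fin m, ∑ i : Fin s, ∑ j : Fin s,
      (if i < j then (u l i - u l j) ^ 2 else 0) ≤ ∑ j : Fin m, (u j ⬝ᵥ N.mulVec (u j)) := by
    rw [Finset.mul_sum]
    exact Finset.sum_le_sum fun l _ => hN (u l)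
  calc μ * c * ∑ l : Fin m, ∑ i : Fin s, ∑ j : Fin s,
          (if i < j then (u l i - u l j) ^ 2 else 0)
      = μ * (c * ∑ l : Fin m, ∑ i : Fin s, ∑ j : Fin s,
          (if i < j then (u l i - u l j) ^ 2 else 0)) := by ring
    _ ≤ μ * ∑ j : Fin m, (u j ⬝ᵥ N.mulVec (u j)) :=
        mul_le_mul_of_nonneg_left h2 hμ.le
    _ ≤ (∑ l : Fin m, (v l ⬝ᵥ N.mulVec (v l)))
          + μ * ∑ j : Fin m, (u j ⬝ᵥ N.mulVec (u j)) := by linarith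
    _ = ∑ j : Fin m, ∑ k : Fin m, A0 j k * (u j ⬝ᵥ N.mulVec (u k)) := hsplit.symm
end

section
/- Let B ∈ ℝ^{m×m} be symmetric negative semidefinite and let N ∈ ℝ^{s×s} be such that N + Nᵀ is positive semidefinite. Then for all vectors u₁, …, u_m ∈ ℝˢ one has Σ_{j,l=1}^{m} B_{jl} · uⱼᵀ N uₗ ≤ 0. -/
open Matrix BigOperators

/-- if `B` is symmetric negative semidefinite and `N + Nᵀ` is positive
semidefinite, then `Σ_{j,l} B_{jl} uⱼᵀ N uₗ ≤ 0` for all vectors `u₁, …, u_m ∈ ℝˢ`. -/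
theorem stmt4 {m s : ℕ} (B : Matrix (Fin m) (Fin m) ℝ)
    (hBsymm : B.IsSymm) (hBneg : ∀ x : Fin m → ℝ, x ⬝ᵥ B.mulVec x ≤ 0)
    (N : Matrix (Fin s) (Fin s) ℝ) (hN : (N + Nᵀ).PosSemidef)
    (u : Fin m → Fin s → ℝ) :
    (∑ j : Fin m, ∑ l : Fin m, B j l * (u j ⬝ᵥ N.mulVec (u l))) ≤ 0 := by
  obtain ⟨A, hA⟩ := (show ∃ A : Matrix (Fin s) (Fin s) ℝ, N + Nᵀ = Aᵀ * A by
    open scoped MatrixOrder in exact CStarAlgebra.nonneg_iff_eq_star_mul_self.mp hN.nonneg)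
  -- symmetrize: twice the sum equals the sum with N + Nᵀ
  have hBsym : ∀ j l, B l j = B j l := by
    intro j l
    have := congrFun (congrFun hBsymm l) j
    simpa [Matrix.transpose_apply] using this.symm
  have hswap : (∑ j : Fin m, ∑ l : Fin m, B j l * (u j ⬝ᵥ Nᵀ.mulVec (u l)))
      = ∑ j : Fin m, ∑ l : Fin m, B j l * (u j ⬝ᵥ N.mulVec (u l)) := by
    rw [Finset.sum_comm]
    refine Finset.sum_congr rfl fun l _ => Finset.sum_congr rfl fun j _ => ?_
    rw [hBsym l j]
    congr 1
    rw [Matrix.dotProduct_mulVec, Matrix.vecMul_transpose, dotProduct_comm]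
  have h2 : 2 * (∑ j : Fin m, ∑ l : Fin m, B j l * (u j ⬝ᵥ N.mulVec (u l)))
      = ∑ j : Fin m, ∑ l : Fin m, B j l * (u j ⬝ᵥ (N + Nᵀ).mulVec (u l)) := by
    simp only [Matrix.add_mulVec, dotProduct_add, mul_add, Finset.sum_add_distrib,
      hswap]
    ring
  have hfac : ∀ j l, u j ⬝ᵥ (N + Nᵀ).mulVec (u l)
      = ∑ k, A.mulVec (u j) k * A.mulVec (u l) k := by
    intro j l
    rw [hA, ← Matrix.mulVec_mulVec, Matrix.dotProduct_mulVec]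
    simp [Matrix.vecMul_conjTranspose, Matrix.vecMul_transpose, dotProduct]
  have hnonpos : (∑ j : Fin m, ∑ l : Fin m, B j l * (u j ⬝ᵥ (N + Nᵀ).mulVec (u l))) ≤ 0 := by
    have rearr : ∀ (f : Fin m → Fin m → Fin s → ℝ),
        ∑ j, ∑ l, ∑ k, f j l k = ∑ k, ∑ j, ∑ l, f j l k := by
      intro f
      rw [show (∑ j, ∑ l, ∑ k, f j l k) = ∑ j, ∑ k, ∑ l, f j l k from
        Finset.sum_congr rfl fun j _ => Finset.sum_comm, Finset.sum_comm]
    simp only [hfac, Finset.mul_sum]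
    rw [rearr]
    refine Finset.sum_nonpos fun k _ => ?_
    refine le_trans (le_of_eq ?_) (hBneg fun j => (A *ᵥ u j) k)
    simp only [dotProduct, Matrix.mulVec, Finset.mul_sum, Finset.sum_mul]
    refine Finset.sum_congr rfl fun j _ => Finset.sum_congr rfl fun l _ =>
      Finset.sum_congr rfl fun a _ => Finset.sum_congr rfl fun b _ => by ring
  linarith [h2 ▸ hnonpos]
end

section
/- Let G ∈ ℝ^{m×m} be invertible, let Λ ∈ ℝ^{m×m} be diagonal with nonpositive diagonal entries, let H ∈ ℝ^{s×s} be lower triangular with nonnegative diagonal entries, and let μ > 0. Set A₀ := Gᵀ G and B := Gᵀ Λ G. Then A₀ ⊗ I_s − μ (B ⊗ H) is invertible and (A₀ ⊗ I_s − μ (B ⊗ H))⁻¹ · (A₀ ⊗ I_s) = (G ⊗ I_s)⁻¹ · (I_{ms} − μ (Λ ⊗ H))⁻¹ · (G ⊗ I_s). -/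
open Matrix BigOperators Kronecker

/-- with `A₀ = Gᵀ G`, `B = Gᵀ Λ G`, `G` invertible, `Λ` diagonal with nonpositive
diagonal, `H` lower triangular with nonnegative diagonal, and `μ > 0`, the matrix
`A₀ ⊗ I_s − μ (B ⊗ H)` is invertible and
`(A₀ ⊗ I_s − μ (B ⊗ H))⁻¹ (A₀ ⊗ I_s) = (G ⊗ I_s)⁻¹ (I − μ (Λ ⊗ H))⁻¹ (G ⊗ I_s)`. -/
theorem stmt8 {m s : ℕ} (G Λ : Matrix (Fin m) (Fin m) ℝ) (hG : IsUnit G)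
    (hΛ : Λ.IsDiag) (hΛd : ∀ p : Fin m, Λ p p ≤ 0)
    (H : Matrix (Fin s) (Fin s) ℝ)
    (hlt : ∀ i j : Fin s, i < j → H i j = 0) (hdiag : ∀ i : Fin s, 0 ≤ H i i)
    (μ : ℝ) (hμ : 0 < μ) :
    IsUnit ((Gᵀ * G) ⊗ₖ (1 : Matrix (Fin s) (Fin s) ℝ) - μ • ((Gᵀ * Λ * G) ⊗ₖ H)) ∧
      ((Gᵀ * G) ⊗ₖ (1 : Matrix (Fin s) (Fin s) ℝ) - μ • ((Gᵀ * Λ * G) ⊗ₖ H))⁻¹ *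
          ((Gᵀ * G) ⊗ₖ (1 : Matrix (Fin s) (Fin s) ℝ)) =
        (G ⊗ₖ (1 : Matrix (Fin s) (Fin s) ℝ))⁻¹ *
          ((1 : Matrix (Fin m × Fin s) (Fin m × Fin s) ℝ) - μ • (Λ ⊗ₖ H))⁻¹ *
          (G ⊗ₖ (1 : Matrix (Fin s) (Fin s) ℝ)) := by
  set D : Matrix (Fin m × Fin s) (Fin m × Fin s) ℝ :=
    (1 : Matrix (Fin m × Fin s) (Fin m × Fin s) ℝ) - μ • (Λ ⊗ₖ H) with hDdef
  -- D is invertible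
  have hD : IsUnit D := by
    rw [Matrix.isUnit_iff_isUnit_det]
    have hbt : ((Matrix.reindex (toLex (α := Fin m × Fin s)) toLex) D).BlockTriangular
        OrderDual.toDual := by
      intro i j hij
      rw [OrderDual.toDual_lt_toDual] at hij
      obtain ⟨⟨p, a⟩, rfl⟩ : ∃ y : Fin m × Fin s, toLex y = i := ⟨ofLex i, rfl⟩
      obtain ⟨⟨q, b⟩, rfl⟩ : ∃ y : Fin m × Fin s, toLex y = j := ⟨ofLex j, rfl⟩
      rw [Prod.Lex.lt_iff] at hij
      simp only [hDdef, Matrix.reindex_apply, Matrix.submatrix_apply, Matrix.sub_apply,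
        Matrix.smul_apply, Matrix.one_apply, Matrix.kroneckerMap_apply, ofLex_toLex, Equiv.symm_apply_apply,
        smul_eq_mul]
      rcases hij with h | ⟨h1, h2⟩
      · rw [hΛ (ne_of_lt (show p < q from h)), if_neg (by rintro ⟨⟩; exact lt_irrefl _ h)]
        ring
      · rw [hlt _ _ (show a < b from h2), if_neg (by rintro ⟨⟩; exact lt_irrefl _ h2)]
        ring
    have hdet : D.det = ∏ x : Lex (Fin m × Fin s),
        ((Matrix.reindex (toLex (α := Fin m × Fin s)) toLex) D) x x := by
      rw [← Matrix.det_of_lowerTriangular _ hbt, Matrix.reindex_apply,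
        Matrix.det_submatrix_equiv_self]
    rw [hdet]
    refine (Finset.prod_pos fun x _ => ?_).ne'.isUnit
    obtain ⟨⟨p, a⟩, rfl⟩ : ∃ y : Fin m × Fin s, toLex y = x := ⟨ofLex x, rfl⟩
    simp only [hDdef, Matrix.reindex_apply, Matrix.submatrix_apply, Matrix.sub_apply,
      Matrix.smul_apply, Matrix.one_apply_eq, Matrix.kroneckerMap_apply, ofLex_toLex, Equiv.symm_apply_apply,
      smul_eq_mul]
    nlinarith [hΛd p, hdiag a, mul_nonneg (neg_nonneg.2 (hΛd p)) (hdiag a)]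
  -- G ⊗ 1 and Gᵀ ⊗ 1 are invertible
  have hKdet : ∀ M : Matrix (Fin m) (Fin m) ℝ, IsUnit M →
      IsUnit (M ⊗ₖ (1 : Matrix (Fin s) (Fin s) ℝ)) := by
    intro M hM
    rw [Matrix.isUnit_iff_isUnit_det, Matrix.det_kronecker, Matrix.det_one, one_pow, mul_one]
    exact ((Matrix.isUnit_iff_isUnit_det M).1 hM).pow _
  have hK : IsUnit (G ⊗ₖ (1 : Matrix (Fin s) (Fin s) ℝ)) := hKdet G hG
  have hKT : IsUnit (Gᵀ ⊗ₖ (1 : Matrix (Fin s) (Fin s) ℝ)) := by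
    refine hKdet Gᵀ ?_
    rwa [Matrix.isUnit_iff_isUnit_det, Matrix.det_transpose, ← Matrix.isUnit_iff_isUnit_det]
  -- key factorization
  have key : (Gᵀ * G) ⊗ₖ (1 : Matrix (Fin s) (Fin s) ℝ) - μ • ((Gᵀ * Λ * G) ⊗ₖ H)
      = (Gᵀ ⊗ₖ (1 : Matrix (Fin s) (Fin s) ℝ)) * D * (G ⊗ₖ (1 : Matrix (Fin s) (Fin s) ℝ)) := by
    rw [hDdef, Matrix.mul_sub, Matrix.sub_mul, Matrix.mul_one, Matrix.mul_smul,
      Matrix.smul_mul, ← Matrix.mul_kronecker_mul, ← Matrix.mul_kronecker_mul,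
      ← Matrix.mul_kronecker_mul]
    simp [Matrix.mul_assoc]
  have hkey2 : (Gᵀ * G) ⊗ₖ (1 : Matrix (Fin s) (Fin s) ℝ)
      = (Gᵀ ⊗ₖ (1 : Matrix (Fin s) (Fin s) ℝ)) * (G ⊗ₖ (1 : Matrix (Fin s) (Fin s) ℝ)) := by
    rw [← Matrix.mul_kronecker_mul, mul_one]
  constructor
  · rw [key]; exact (hKT.mul hD).mul hK
  · rw [key, hkey2, Matrix.mul_inv_rev, Matrix.mul_inv_rev]
    have h1 : (Gᵀ ⊗ₖ (1 : Matrix (Fin s) (Fin s) ℝ))⁻¹ *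
        ((Gᵀ ⊗ₖ (1 : Matrix (Fin s) (Fin s) ℝ)) * (G ⊗ₖ (1 : Matrix (Fin s) (Fin s) ℝ)))
        = G ⊗ₖ (1 : Matrix (Fin s) (Fin s) ℝ) := by
      rw [← Matrix.mul_assoc, Matrix.nonsing_inv_mul _ ((Matrix.isUnit_iff_isUnit_det _).1 hKT),
        Matrix.one_mul]
    rw [Matrix.mul_assoc, Matrix.mul_assoc, h1, ← Matrix.mul_assoc]
end

section
/- Let H ∈ ℝ^{s×s} be lower triangular, let D̃ be its diagonal part and K := H − D̃ its strictly lower triangular part, let Λ ∈ ℝ^{m×m} be diagonal with nonpositive diagonal entries, and let μ > 0. Set D := I_{ms} − μ (Λ ⊗ D̃). If the diagonal entries of H are nonnegative, then D is invertible and (I_{ms} − μ (Λ ⊗ H))⁻¹ = ( I_{ms} + Σ_{i=1}^{ms−1} (μ D⁻¹ (Λ ⊗ K))ⁱ ) · D⁻¹. -/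
open Matrix BigOperators Kronecker

/-- with `D̃` the diagonal part of the lower triangular matrix `H` (with
nonnegative diagonal), `K := H − D̃`, `Λ` diagonal with nonpositive diagonal, `μ > 0`, and
`D := I − μ (Λ ⊗ D̃)`, the matrix `D` is invertible and
`(I − μ (Λ ⊗ H))⁻¹ = (I + Σ_{i=1}^{ms−1} (μ D⁻¹ (Λ ⊗ K))ⁱ) D⁻¹`. -/
theorem stmt9 {m s : ℕ} (H : Matrix (Fin s) (Fin s) ℝ)
    (hlt : ∀ i j : Fin s, i < j → H i j = 0) (hdiag : ∀ i : Fin s, 0 ≤ H i i)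
    (Λ : Matrix (Fin m) (Fin m) ℝ) (hΛ : Λ.IsDiag) (hΛd : ∀ p : Fin m, Λ p p ≤ 0)
    (μ : ℝ) (hμ : 0 < μ)
    (Dt : Matrix (Fin s) (Fin s) ℝ) (hDt : Dt = Matrix.diagonal fun i => H i i)
    (K : Matrix (Fin s) (Fin s) ℝ) (hK : K = H - Dt)
    (D : Matrix (Fin m × Fin s) (Fin m × Fin s) ℝ)
    (hD : D = (1 : Matrix (Fin m × Fin s) (Fin m × Fin s) ℝ) - μ • (Λ ⊗ₖ Dt)) :
    IsUnit D ∧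
      ((1 : Matrix (Fin m × Fin s) (Fin m × Fin s) ℝ) - μ • (Λ ⊗ₖ H))⁻¹ =
        ((1 : Matrix (Fin m × Fin s) (Fin m × Fin s) ℝ) +
            ∑ i ∈ Finset.Icc 1 (m * s - 1), (μ • (D⁻¹ * (Λ ⊗ₖ K))) ^ i) * D⁻¹ := by
  by_cases hms : m = 0 ∨ s = 0
  · have hE : IsEmpty (Fin m × Fin s) := by
      rcases hms with h | h <;> subst h <;> infer_instance
    constructor
    · have : D = 1 := Subsingleton.elim _ _
      rw [this]; exact isUnit_one
    · exact Subsingleton.elim _ _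
  push_neg at hms
  obtain ⟨hm0, hs0⟩ := hms
  -- D is diagonal with entries ≥ 1
  set d : Fin m × Fin s → ℝ := fun x => 1 - μ * (Λ x.1 x.1 * H x.2 x.2) with hd_def
  have hDdiag : D = Matrix.diagonal d := by
    rw [hD, hDt]
    ext ⟨p, i⟩ ⟨q, j⟩
    by_cases h : (p, i) = (q, j)
    · rw [h]
      simp [Matrix.sub_apply, Matrix.one_apply, Matrix.diagonal_apply,
        Matrix.smul_apply, Matrix.kroneckerMap_apply, hd_def]
    · have hne : ¬(p = q ∧ i = j) := by simpa [Prod.ext_iff] using h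
      rcases Decidable.em (p = q) with rfl | hpq
      · have hij : i ≠ j := fun hij => hne ⟨rfl, hij⟩
        simp [Matrix.sub_apply, Matrix.one_apply, Matrix.diagonal_apply, h,
          Matrix.smul_apply, Matrix.kroneckerMap_apply, hij]
      · simp [Matrix.sub_apply, Matrix.one_apply, Matrix.diagonal_apply, h,
          Matrix.smul_apply, Matrix.kroneckerMap_apply, hΛ hpq]
  have hd1 : ∀ x : Fin m × Fin s, 1 ≤ d x := by
    intro x
    have h1 : Λ x.1 x.1 * H x.2 x.2 ≤ 0 :=
      mul_nonpos_of_nonpos_of_nonneg (hΛd x.1) (hdiag x.2)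
    simp only [hd_def]
    nlinarith
  have hdne : ∀ x, d x ≠ 0 := fun x => by linarith [hd1 x]
  have hdet : IsUnit D.det := by
    rw [hDdiag, Matrix.det_diagonal]
    exact (Finset.prod_ne_zero_iff.mpr fun x _ => hdne x).isUnit
  have hDDi : D * D⁻¹ = 1 := Matrix.mul_nonsing_inv _ hdet
  refine ⟨(Matrix.isUnit_iff_isUnit_det D).mpr hdet, ?_⟩
  set N := μ • (D⁻¹ * (Λ ⊗ₖ K)) with hN
  -- K is strictly lower triangular
  have hK0 : ∀ i j : Fin s, ¬ j < i → K i j = 0 := by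
    intro i j hji
    rw [hK, hDt, Matrix.sub_apply, Matrix.diagonal_apply]
    rcases lt_or_eq_of_le (not_lt.mp hji) with hij | rfl
    · rw [hlt i j hij, if_neg (ne_of_lt hij), sub_zero]
    · simp
  -- N entries vanish off the strictly lower part (in the second coordinate)
  have hNentry : ∀ x y : Fin m × Fin s, ¬ y.2 < x.2 → N x y = 0 := by
    intro x y h
    have hDinv : D⁻¹ = Matrix.diagonal (Ring.inverse d) := by
      rw [hDdiag, Matrix.inv_diagonal]
    rw [hN, Matrix.smul_apply, hDinv, Matrix.diagonal_mul,
      Matrix.kroneckerMap_apply, hK0 x.2 y.2 h]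
    simp
  -- powers of N
  have hpow : ∀ k, ∀ x y : Fin m × Fin s, (x.2 : ℕ) < (y.2 : ℕ) + k → (N ^ k) x y = 0 := by
    intro k
    induction k with
    | zero =>
      intro x y h
      rw [pow_zero]
      apply Matrix.one_apply_ne
      intro he
      rw [he] at h
      omega
    | succ k ih =>
      intro x y h
      rw [pow_succ, Matrix.mul_apply]
      apply Finset.sum_eq_zero
      intro z _
      by_cases hz : (x.2 : ℕ) < (z.2 : ℕ) + k
      · rw [ih x z hz, zero_mul]
      · have hzy : ¬ y.2 < z.2 := by
          rw [Fin.lt_def]; omega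
        rw [hNentry z y hzy, mul_zero]
  have hNs : N ^ s = 0 := by
    ext x y
    rw [Matrix.zero_apply]
    exact hpow s x y (by have := x.2.isLt; omega)
  have hNms : N ^ (m * s) = 0 := by
    have hle : s ≤ m * s := Nat.le_mul_of_pos_left s (Nat.pos_of_ne_zero hm0)
    calc N ^ (m * s) = N ^ s * N ^ (m * s - s) := by rw [← pow_add]; congr 1; omega
    _ = 0 := by rw [hNs, zero_mul]
  set S := ∑ i ∈ Finset.range (m * s), N ^ i with hS
  have hgeom : S * (1 - N) = 1 := by
    have h1 := geom_sum_mul N (m * s)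
    rw [hNms] at h1
    calc S * (1 - N) = -(S * (N - 1)) := by rw [← neg_sub, mul_neg]
    _ = -(0 - 1) := by rw [hS, h1]
    _ = 1 := by simp
  have hgeom' : (1 - N) * S = 1 := by
    have h1 := mul_geom_sum N (m * s)
    rw [hNms] at h1
    calc (1 - N) * S = -((N - 1) * S) := by rw [← neg_sub, neg_mul]
    _ = -(0 - 1) := by rw [hS, h1]
    _ = 1 := by simp
  -- factorization
  have hHsum : H = Dt + K := by rw [hK]; abel
  have hfact : (1 : Matrix (Fin m × Fin s) (Fin m × Fin s) ℝ) - μ • (Λ ⊗ₖ H)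
      = D * (1 - N) := by
    rw [mul_sub, mul_one, hN, mul_smul_comm, ← Matrix.mul_assoc, hDDi, Matrix.one_mul,
      hD, hHsum, Matrix.kronecker_add, smul_add]
    abel
  rw [hfact, Matrix.mul_inv_rev, Matrix.inv_eq_right_inv hgeom']
  congr 1
  -- S = 1 + ∑_{i ∈ Icc 1 (ms-1)} N^i
  have hrange : Finset.range (m * s) = insert 0 (Finset.Icc 1 (m * s - 1)) := by
    ext x
    simp only [Finset.mem_range, Finset.mem_insert, Finset.mem_Icc]
    have : 1 ≤ m * s := Nat.one_le_iff_ne_zero.mpr (Nat.mul_ne_zero hm0 hs0)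
    omega
  rw [hS, hrange, Finset.sum_insert (by simp), pow_zero]
end

section
/- Let H ∈ ℝ^{s×s} be lower triangular with zero first row and with h_{ii} > 0 for 2 ≤ i ≤ s, let D̃ be its diagonal part and K := H − D̃, and let Λ ∈ ℝ^{m×m} be diagonal with nonpositive diagonal entries. Then there exists a constant C > 0 such that for every μ > 0, setting D := I_{ms} − μ (Λ ⊗ D̃), every entry of the matrix μ D⁻¹ (Λ ⊗ K) has absolute value at most C · μ/(1+μ). -/
open Matrix BigOperators Kronecker

/-- for `H` lower triangular with zero first row and positive diagonal entries
`h_{ii} > 0` for `2 ≤ i ≤ s`, `D̃` its diagonal part, `K := H − D̃`, and `Λ` diagonal with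
nonpositive diagonal, there is `C > 0` such that for all `μ : ℝ`, every entry of
`μ D⁻¹ (Λ ⊗ K)` (with `D := I − μ (Λ ⊗ D̃)`) is bounded by `C μ/(1+μ)` in absolute value. -/
theorem stmt10 {m s : ℕ} (H : Matrix (Fin s) (Fin s) ℝ)
    (hlt : ∀ i j : Fin s, i < j → H i j = 0)
    (hrow : ∀ i j : Fin s, i.val = 0 → H i j = 0)
    (hdiag : ∀ i : Fin s, 0 < i.val → 0 < H i i)
    (Λ : Matrix (Fin m) (Fin m) ℝ) (hΛ : Λ.IsDiag) (hΛd : ∀ p : Fin m, Λ p p ≤ 0) :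
    ∃ C > (0 : ℝ), ∀ μ : ℝ, 0 < μ → ∀ α β : Fin m × Fin s,
      |(μ • (((1 : Matrix (Fin m × Fin s) (Fin m × Fin s) ℝ) -
            μ • (Λ ⊗ₖ (Matrix.diagonal fun i => H i i)))⁻¹ *
          (Λ ⊗ₖ (H - Matrix.diagonal fun i => H i i)))) α β| ≤ C * (μ / (1 + μ)) := by
  classical
  set K : Matrix (Fin s) (Fin s) ℝ := H - Matrix.diagonal fun i => H i i with hK
  set A : ℝ := ∑ p : Fin m, |Λ p p| with hA
  set B : ℝ := ∑ i : Fin s, (if 0 < i.val then (H i i)⁻¹ else 0) with hB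
  set M : ℝ := ∑ i : Fin s, ∑ j : Fin s, |K i j| with hM
  have hA0 : 0 ≤ A := Finset.sum_nonneg fun p _ => abs_nonneg _
  have hB0 : 0 ≤ B := Finset.sum_nonneg fun i _ => by
    split_ifs with h
    · exact le_of_lt (inv_pos.mpr (hdiag i h))
    · exact le_rfl
  have hM0 : 0 ≤ M := Finset.sum_nonneg fun i _ =>
    Finset.sum_nonneg fun j _ => abs_nonneg _
  refine ⟨(A + B) * M + 1, by positivity, fun μ hμ α β => ?_⟩
  have hμ1 : (0:ℝ) < 1 + μ := by linarith
  have hratio : 0 < μ / (1 + μ) := div_pos hμ hμ1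
  -- diagonalize D
  have hkd : Λ ⊗ₖ (Matrix.diagonal fun i => H i i)
      = Matrix.diagonal (fun α : Fin m × Fin s => Λ α.1 α.1 * H α.2 α.2) := by
    conv_lhs => rw [← hΛ.diagonal_diag, Matrix.diagonal_kronecker_diagonal]
    rfl
  set d : Fin m × Fin s → ℝ := fun α => 1 - μ * (Λ α.1 α.1 * H α.2 α.2) with hd
  have hd1 : ∀ α, 1 ≤ d α := by
    intro α
    have hH : 0 ≤ H α.2 α.2 := by
      rcases Nat.eq_zero_or_pos α.2.val with h | h
      · exact le_of_eq (hrow α.2 α.2 h).symm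
      · exact le_of_lt (hdiag α.2 h)
    have h2 : Λ α.1 α.1 * H α.2 α.2 ≤ 0 := mul_nonpos_of_nonpos_of_nonneg (hΛd α.1) hH
    have h3 : μ * (Λ α.1 α.1 * H α.2 α.2) ≤ 0 := mul_nonpos_of_nonneg_of_nonpos hμ.le h2
    simp only [hd]
    linarith
  have hdne : ∀ α, d α ≠ 0 := fun α => by have := hd1 α; linarith
  have hDeq : (1 : Matrix (Fin m × Fin s) (Fin m × Fin s) ℝ) - μ • (Λ ⊗ₖ (Matrix.diagonal fun i => H i i))
      = Matrix.diagonal d := by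
    rw [hkd, ← Matrix.diagonal_smul, ← Matrix.diagonal_one, ← Matrix.diagonal_sub]
    rfl
  have hDinv : ((1 : Matrix (Fin m × Fin s) (Fin m × Fin s) ℝ) -
      μ • (Λ ⊗ₖ (Matrix.diagonal fun i => H i i)))⁻¹
      = Matrix.diagonal (fun α => (d α)⁻¹) := by
    rw [hDeq]
    apply Matrix.inv_eq_right_inv
    have hfun : (fun α => d α * (d α)⁻¹) = fun _ => (1:ℝ) :=
      funext fun α => mul_inv_cancel₀ (hdne α)
    rw [Matrix.diagonal_mul_diagonal, hfun, Matrix.diagonal_one]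
  rw [hDinv]
  rcases α with ⟨p, i⟩
  rcases β with ⟨q, j⟩
  have hentry : (μ • (Matrix.diagonal (fun α => (d α)⁻¹) * (Λ ⊗ₖ K))) (p, i) (q, j)
      = μ * ((d (p, i))⁻¹ * (Λ p q * K i j)) := by
    simp [Matrix.smul_apply, Matrix.diagonal_mul, Matrix.kroneckerMap_apply]
  rw [hentry]
  by_cases hz : Λ p q * K i j = 0
  · rw [hz]
    simp only [mul_zero, abs_zero]
    positivity
  -- nonzero case
  have hpq : p = q := by
    by_contra hne
    exact hz (by rw [hΛ hne, zero_mul])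
  subst hpq
  have hKne : K i j ≠ 0 := fun h => hz (by rw [h, mul_zero])
  have hij : i ≠ j := by
    rintro rfl
    apply hKne
    simp [hK, Matrix.sub_apply]
  have hji : j < i := by
    rcases lt_or_gt_of_ne hij with h | h
    · exfalso; apply hKne; simp [hK, Matrix.sub_apply, hlt i j h,
        Matrix.diagonal_apply_ne _ hij]
    · exact h
  have hi0 : 0 < i.val := lt_of_le_of_lt (Nat.zero_le _) hji
  have hHii : 0 < H i i := hdiag i hi0
  set lam : ℝ := Λ p p with hl
  have hlamneg : lam ≤ 0 := hΛd p
  have hdval : d (p, i) = 1 + μ * (-lam) * H i i := by simp [hd]; ring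
  have hdpos : 0 < d (p, i) := lt_of_lt_of_le one_pos (hd1 _)
  -- bound |lam| ≤ A, (H i i)⁻¹ ≤ B, |K i j| ≤ M
  have hAb : |lam| ≤ A := by
    rw [hA]
    exact Finset.single_le_sum (f := fun p => |Λ p p|) (fun p _ => abs_nonneg _)
      (Finset.mem_univ p)
  have hBb : (H i i)⁻¹ ≤ B := by
    rw [hB]
    have := Finset.single_le_sum
      (f := fun i : Fin s => if 0 < i.val then (H i i)⁻¹ else 0)
      (fun i _ => by split_ifs with h
                     · exact le_of_lt (inv_pos.mpr (hdiag i h))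
                     · exact le_rfl)
      (Finset.mem_univ i)
    simpa [hi0] using this
  have hMb : |K i j| ≤ M := by
    rw [hM]
    calc |K i j| ≤ ∑ j' : Fin s, |K i j'| :=
          Finset.single_le_sum (f := fun j' => |K i j'|) (fun _ _ => abs_nonneg _)
            (Finset.mem_univ j)
      _ ≤ ∑ i' : Fin s, ∑ j' : Fin s, |K i' j'| :=
          Finset.single_le_sum (f := fun i' => ∑ j' : Fin s, |K i' j'|)
            (fun i' _ => Finset.sum_nonneg fun _ _ => abs_nonneg _) (Finset.mem_univ i)
  -- key inequality
  have habs : |μ * ((d (p, i))⁻¹ * (lam * K i j))|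
      = μ * (d (p, i))⁻¹ * |lam| * |K i j| := by
    rw [abs_mul, abs_mul, abs_mul, abs_of_pos hμ, abs_of_pos (inv_pos.mpr hdpos)]
    ring
  rw [habs]
  have hL : (0:ℝ) ≤ -lam := neg_nonneg.mpr hlamneg
  have hhi : H i i * (H i i)⁻¹ = 1 := mul_inv_cancel₀ (ne_of_gt hHii)
  have hdpos' : (0:ℝ) < 1 + μ * -lam * H i i := hdval ▸ hdpos
  have hkey : μ * (d (p, i))⁻¹ * |lam| ≤ (|lam| + (H i i)⁻¹) * (μ / (1 + μ)) := by
    have habslam : |lam| = -lam := abs_of_nonpos hlamneg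
    rw [habslam, hdval]
    have h1 : μ * (1 + μ * -lam * H i i)⁻¹ * (-lam)
        = (μ * (-lam)) / (1 + μ * -lam * H i i) := by ring
    have h2 : ((-lam) + (H i i)⁻¹) * (μ / (1 + μ)) = (((-lam) + (H i i)⁻¹) * μ) / (1 + μ) := by
      ring
    rw [h1, h2, div_le_div_iff₀ hdpos' hμ1]
    nlinarith [hhi, mul_pos hμ (inv_pos.mpr hHii),
      mul_nonneg (mul_nonneg (mul_nonneg hL hL) hHii.le) (mul_nonneg hμ.le hμ.le),
      mul_nonneg (mul_nonneg hμ.le hμ.le) hL]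
  calc μ * (d (p, i))⁻¹ * |lam| * |K i j|
      ≤ (|lam| + (H i i)⁻¹) * (μ / (1 + μ)) * M := by
        apply mul_le_mul hkey hMb (abs_nonneg _)
        positivity
    _ ≤ ((A + B) * M + 1) * (μ / (1 + μ)) := by
        have h3 : (|lam| + (H i i)⁻¹) * (μ / (1 + μ)) * M
            = ((|lam| + (H i i)⁻¹) * M) * (μ / (1 + μ)) := by ring
        rw [h3]
        apply mul_le_mul_of_nonneg_right _ (le_of_lt hratio)
        have : (|lam| + (H i i)⁻¹) * M ≤ (A + B) * M := by
          apply mul_le_mul_of_nonneg_right (add_le_add hAb hBb) hM0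
        linarith
end

section
/- Let G ∈ ℝ^{m×m} be invertible, let Λ ∈ ℝ^{m×m} be diagonal with nonpositive diagonal entries, and let H ∈ ℝ^{s×s} be lower triangular with zero first row and with h_{ii} > 0 for 2 ≤ i ≤ s. Then there exists a constant C > 0 such that for every μ > 0, every entry of the matrix Φ_μ := (G ⊗ I_s)⁻¹ (I_{ms} − μ (Λ ⊗ H))⁻¹ (G ⊗ I_s) has absolute value at most C. -/
open Matrix BigOperators Kronecker

private lemma det_abs_le_aux {s : ℕ} (A : Matrix (Fin s) (Fin s) ℝ) (b : ℝ) (hb : 0 ≤ b)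
    (j : Fin s) (hj : ∀ k, |A j k| ≤ 1) (hA : ∀ i k, |A i k| ≤ b) :
    |A.det| ≤ Nat.factorial s * b ^ (s - 1) := by
  rw [Matrix.det_apply']
  refine le_trans (Finset.abs_sum_le_sum_abs _ _) ?_
  have step : ∀ σ : Equiv.Perm (Fin s), |(Equiv.Perm.sign σ : ℤ) * ∏ i, A (σ i) i| ≤ b ^ (s - 1) := by
    intro σ
    have h1 : |((Equiv.Perm.sign σ : ℤ) : ℝ) * ∏ i, A (σ i) i| = ∏ i, |A (σ i) i| := by
      rcases Int.units_eq_one_or (Equiv.Perm.sign σ) with h | h <;>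
        simp [h, abs_mul, Finset.abs_prod]
    rw [h1]
    have hmem : σ⁻¹ j ∈ (Finset.univ : Finset (Fin s)) := Finset.mem_univ _
    rw [← Finset.mul_prod_erase Finset.univ (fun i => |A (σ i) i|) hmem]
    have h2 : |A (σ (σ⁻¹ j)) (σ⁻¹ j)| ≤ 1 := by
      rw [show σ (σ⁻¹ j) = j from σ.apply_symm_apply j]; exact hj _
    have h3 : ∏ i ∈ Finset.univ.erase (σ⁻¹ j), |A (σ i) i| ≤ b ^ (s - 1) := by
      have := Finset.prod_le_prod (f := fun i => |A (σ i) i|) (g := fun _ => b)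
        (s := Finset.univ.erase (σ⁻¹ j)) (fun i _ => abs_nonneg _) (fun i _ => hA _ _)
      simpa [Finset.card_erase_of_mem hmem] using this
    calc |A (σ (σ⁻¹ j)) (σ⁻¹ j)| * ∏ i ∈ Finset.univ.erase (σ⁻¹ j), |A (σ i) i|
        ≤ 1 * (b ^ (s - 1)) := by
          exact mul_le_mul h2 h3 (Finset.prod_nonneg fun _ _ => abs_nonneg _) zero_le_one
      _ = b ^ (s - 1) := one_mul _
  calc ∑ σ : Equiv.Perm (Fin s), |(Equiv.Perm.sign σ : ℤ) * ∏ i, A (σ i) i|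
      ≤ (Finset.univ : Finset (Equiv.Perm (Fin s))).card • (b ^ (s - 1)) :=
        Finset.sum_le_card_nsmul _ _ _ (fun σ _ => step σ)
    _ = Nat.factorial s * b ^ (s - 1) := by
        simp [Finset.card_univ, Fintype.card_perm, nsmul_eq_mul]

private lemma block_inv_bound {s : ℕ} (H : Matrix (Fin s) (Fin s) ℝ)
    (hlt : ∀ i j : Fin s, i < j → H i j = 0)
    (hrow : ∀ i j : Fin s, i.val = 0 → H i j = 0)
    (hdiag : ∀ i : Fin s, 0 < i.val → 0 < H i i) :
    ∃ C > (0:ℝ), ∀ t : ℝ, 0 ≤ t →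
      ((1 : Matrix (Fin s) (Fin s) ℝ) + t • H).det ≠ 0 ∧
      ∀ i j : Fin s, |(((1 : Matrix (Fin s) (Fin s) ℝ) + t • H)⁻¹) i j| ≤ C := by
  classical
  set K : ℝ := ∑ i : Fin s, ∑ j : Fin s, |H i j| with hKdef
  have hK0 : 0 ≤ K := Finset.sum_nonneg fun _ _ => Finset.sum_nonneg fun _ _ => abs_nonneg _
  have hHK : ∀ i j, |H i j| ≤ K := by
    intro i j
    calc |H i j| ≤ ∑ j' : Fin s, |H i j'| :=
          Finset.single_le_sum (f := fun j' => |H i j'|) (fun _ _ => abs_nonneg _) (Finset.mem_univ j)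
      _ ≤ K := Finset.single_le_sum (f := fun i' => ∑ j' : Fin s, |H i' j'|)
          (fun _ _ => Finset.sum_nonneg fun _ _ => abs_nonneg _) (Finset.mem_univ i)
  set Mb : ℝ := 1 + K with hMbdef
  have hMb1 : 1 ≤ Mb := by simp [hMbdef]; linarith
  set S : Finset (Fin s) := Finset.univ.filter (fun i : Fin s => 0 < i.val) with hSdef
  set P : ℝ := ∏ i ∈ S, min 1 (H i i) with hPdef
  have hP0 : 0 < P := by
    refine Finset.prod_pos fun i hi => ?_
    have : 0 < i.val := (Finset.mem_filter.mp hi).2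
    exact lt_min one_pos (hdiag i this)
  have hScard : S.card = s - 1 := by
    rcases s with _ | n
    · simp [hSdef]
    · have hS' : S = Finset.univ.erase (0 : Fin (n+1)) := by
        ext i
        simp only [hSdef, Finset.mem_filter, Finset.mem_univ, true_and, Finset.mem_erase, and_true, ne_eq, Fin.ext_iff, Fin.val_zero]; omega
      rw [hS', Finset.card_erase_of_mem (Finset.mem_univ _)]
      simp
  refine ⟨Nat.factorial s * Mb ^ (s - 1) / P + 1, by positivity, ?_⟩
  intro t ht
  set B : Matrix (Fin s) (Fin s) ℝ := 1 + t • H with hBdef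
  have hBij : ∀ i j, B i j = (if i = j then (1:ℝ) else 0) + t * H i j := by
    intro i j
    simp [hBdef, Matrix.add_apply, Matrix.one_apply, Matrix.smul_apply, smul_eq_mul]
  have hBdet : B.det = ∏ i, (1 + t * H i i) := by
    rw [Matrix.det_of_lowerTriangular B (fun i j hij => ?_)]
    · exact Finset.prod_congr rfl fun i _ => by rw [hBij]; simp
    · have : i < j := hij
      rw [hBij, hlt i j this]
      simp [ne_of_lt this]
  have hdet_ge : P * (1 + t) ^ (s - 1) ≤ B.det := by
    rw [hBdet, ← Finset.prod_filter_mul_prod_filter_not Finset.univ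
      (fun i : Fin s => 0 < i.val) (fun i => 1 + t * H i i)]
    have h2 : ∏ i ∈ Finset.univ.filter (fun i : Fin s => ¬ 0 < i.val), (1 + t * H i i) = 1 := by
      refine Finset.prod_eq_one fun i hi => ?_
      have : i.val = 0 := Nat.eq_zero_of_not_pos (Finset.mem_filter.mp hi).2
      rw [hrow i i this]; ring
    rw [h2, mul_one]
    have h3 : P * (1 + t) ^ (s - 1) = ∏ i ∈ S, (min 1 (H i i) * (1 + t)) := by
      rw [Finset.prod_mul_distrib, Finset.prod_const, hScard, hPdef]
    rw [h3]
    refine Finset.prod_le_prod (fun i hi => ?_) (fun i hi => ?_)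
    · have : 0 < i.val := (Finset.mem_filter.mp hi).2
      have := hdiag i this
      positivity
    · have hipos : 0 < i.val := (Finset.mem_filter.mp hi).2
      have hHii := hdiag i hipos
      have hm1 : min 1 (H i i) ≤ 1 := min_le_left _ _
      have hm2 : min 1 (H i i) ≤ H i i := min_le_right _ _
      nlinarith
  have hdet_pos : 0 < B.det := lt_of_lt_of_le (by positivity) hdet_ge
  refine ⟨ne_of_gt hdet_pos, fun i j => ?_⟩
  have hadj : ∀ i' j', |B.adjugate i' j'| ≤ Nat.factorial s * (Mb * (1 + t)) ^ (s - 1) := by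
    intro i' j'
    rw [Matrix.adjugate_apply]
    refine det_abs_le_aux _ _ (by positivity) j' (fun k => ?_) (fun i'' k => ?_)
    · rw [Matrix.updateRow_self]
      rcases eq_or_ne i' k with h | h <;> simp [Pi.single_apply, h]
    · rcases eq_or_ne i'' j' with h | h
      · subst h
        rw [Matrix.updateRow_self]
        have h1 : |(Pi.single i' 1 : Fin s → ℝ) k| ≤ 1 := by
          rcases eq_or_ne i' k with h | h <;> simp [Pi.single_apply, h]
        have : (1:ℝ) ≤ Mb * (1 + t) := by nlinarith
        linarith
      · rw [Matrix.updateRow_ne h, hBij]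
        have h1 : |(if i'' = k then (1:ℝ) else 0)| ≤ 1 := by split <;> simp
        have h2 : |t * H i'' k| ≤ t * K := by
          rw [abs_mul, abs_of_nonneg ht]
          exact mul_le_mul_of_nonneg_left (hHK _ _) ht
        calc |(if i'' = k then (1:ℝ) else 0) + t * H i'' k|
            ≤ |(if i'' = k then (1:ℝ) else 0)| + |t * H i'' k| := abs_add_le _ _
          _ ≤ 1 + t * K := by linarith
          _ ≤ Mb * (1 + t) := by simp [hMbdef]; nlinarith
  have hinv : B⁻¹ i j = (B.det)⁻¹ * B.adjugate i j := by
    rw [Matrix.inv_def, Matrix.smul_apply, Ring.inverse_eq_inv, smul_eq_mul]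
  rw [hinv, abs_mul, abs_of_pos (inv_pos.mpr hdet_pos)]
  have hQ : (0:ℝ) < (1 + t) ^ (s - 1) := by positivity
  calc (B.det)⁻¹ * |B.adjugate i j|
      ≤ (P * (1 + t) ^ (s - 1))⁻¹ * (Nat.factorial s * (Mb * (1 + t)) ^ (s - 1)) := by
        refine mul_le_mul ?_ (hadj i j) (abs_nonneg _) (by positivity)
        exact inv_anti₀ (by positivity) hdet_ge
    _ = Nat.factorial s * Mb ^ (s - 1) / P := by
        rw [mul_pow]
        field_simp
    _ ≤ Nat.factorial s * Mb ^ (s - 1) / P + 1 := by linarith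

/-- for `G` invertible, `Λ` diagonal with nonpositive diagonal, and `H` lower
triangular with zero first row and positive diagonal entries `h_{ii} > 0` for `2 ≤ i ≤ s`,
there is `C > 0` bounding, uniformly in `μ > 0`, all entries of
`Φ_μ := (G ⊗ I_s)⁻¹ (I − μ (Λ ⊗ H))⁻¹ (G ⊗ I_s)`. -/
theorem stmt11 {m s : ℕ} (G : Matrix (Fin m) (Fin m) ℝ) (hG : IsUnit G)
    (Λ : Matrix (Fin m) (Fin m) ℝ) (hΛ : Λ.IsDiag) (hΛd : ∀ p : Fin m, Λ p p ≤ 0)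
    (H : Matrix (Fin s) (Fin s) ℝ)
    (hlt : ∀ i j : Fin s, i < j → H i j = 0)
    (hrow : ∀ i j : Fin s, i.val = 0 → H i j = 0)
    (hdiag : ∀ i : Fin s, 0 < i.val → 0 < H i i) :
    ∃ C > (0 : ℝ), ∀ μ : ℝ, 0 < μ → ∀ α β : Fin m × Fin s,
      |((G ⊗ₖ (1 : Matrix (Fin s) (Fin s) ℝ))⁻¹ *
          ((1 : Matrix (Fin m × Fin s) (Fin m × Fin s) ℝ) - μ • (Λ ⊗ₖ H))⁻¹ *
          (G ⊗ₖ (1 : Matrix (Fin s) (Fin s) ℝ))) α β| ≤ C := by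
  classical
  obtain ⟨CB, hCB, hblock⟩ := block_inv_bound H hlt hrow hdiag
  set A : Matrix (Fin m × Fin s) (Fin m × Fin s) ℝ :=
    (G ⊗ₖ (1 : Matrix (Fin s) (Fin s) ℝ))⁻¹ with hAdef
  set Gk : Matrix (Fin m × Fin s) (Fin m × Fin s) ℝ :=
    G ⊗ₖ (1 : Matrix (Fin s) (Fin s) ℝ) with hGkdef
  set SA : ℝ := ∑ x : Fin m × Fin s, ∑ y : Fin m × Fin s, |A x y| with hSAdef
  set SG : ℝ := ∑ x : Fin m × Fin s, ∑ y : Fin m × Fin s, |Gk x y| with hSGdef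
  have hSA0 : 0 ≤ SA := Finset.sum_nonneg fun _ _ => Finset.sum_nonneg fun _ _ => abs_nonneg _
  have hSG0 : 0 ≤ SG := Finset.sum_nonneg fun _ _ => Finset.sum_nonneg fun _ _ => abs_nonneg _
  have entry_le : ∀ (M : Matrix (Fin m × Fin s) (Fin m × Fin s) ℝ) (α β : Fin m × Fin s),
      |M α β| ≤ ∑ x : Fin m × Fin s, ∑ y : Fin m × Fin s, |M x y| := by
    intro M α β
    calc |M α β| ≤ ∑ y : Fin m × Fin s, |M α y| :=
          Finset.single_le_sum (f := fun y => |M α y|) (fun _ _ => abs_nonneg _)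
            (Finset.mem_univ β)
      _ ≤ _ := Finset.single_le_sum (f := fun x => ∑ y : Fin m × Fin s, |M x y|)
          (fun _ _ => Finset.sum_nonneg fun _ _ => abs_nonneg _) (Finset.mem_univ α)
  set n : ℕ := Fintype.card (Fin m × Fin s) with hndef
  have hT0 : 0 ≤ (n:ℝ) * ((n:ℝ) * (SA * CB) * SG) :=
    mul_nonneg (Nat.cast_nonneg n)
      (mul_nonneg (mul_nonneg (Nat.cast_nonneg n) (mul_nonneg hSA0 hCB.le)) hSG0)
  refine ⟨n * (n * (SA * CB) * SG) + 1, by linarith, ?_⟩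
  intro μ hμ α β
  -- the blockwise inverse
  set N : Matrix (Fin m × Fin s) (Fin m × Fin s) ℝ := fun pi qj =>
    if pi.1 = qj.1 then
      (((1 : Matrix (Fin s) (Fin s) ℝ) + (μ * -Λ pi.1 pi.1) • H)⁻¹) pi.2 qj.2
    else 0 with hNdef
  have htnn : ∀ p : Fin m, 0 ≤ μ * -Λ p p := fun p =>
    mul_nonneg hμ.le (neg_nonneg.mpr (hΛd p))
  have hNle : ∀ γ δ, |N γ δ| ≤ CB := by
    intro γ δ
    rw [hNdef]
    dsimp only
    split
    · exact (hblock _ (htnn γ.1)).2 _ _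
    · simpa using hCB.le
  have hMN : ((1 : Matrix (Fin m × Fin s) (Fin m × Fin s) ℝ) - μ • (Λ ⊗ₖ H)) * N = 1 := by
    ext ⟨p, i⟩ ⟨q, j⟩
    rw [Matrix.mul_apply, Fintype.sum_prod_type]
    have hM : ∀ (r : Fin m) (k : Fin s),
        ((1 : Matrix (Fin m × Fin s) (Fin m × Fin s) ℝ) - μ • (Λ ⊗ₖ H)) (p, i) (r, k) =
          if p = r then ((1 : Matrix (Fin s) (Fin s) ℝ) + (μ * -Λ p p) • H) i k else 0 := by
      intro r k
      by_cases hpr : p = r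
      · subst hpr
        simp only [Matrix.sub_apply, Matrix.smul_apply, Matrix.kroneckerMap_apply,
          Matrix.one_apply, Matrix.add_apply, Prod.mk.injEq, smul_eq_mul, if_pos rfl]
        split_ifs with h1 h2 h3 <;> simp_all <;> ring
      · have hΛ0 : Λ p r = 0 := hΛ hpr
        simp [Matrix.sub_apply, Matrix.smul_apply, Matrix.kroneckerMap_apply,
          Matrix.one_apply, Prod.ext_iff, hpr, hΛ0]
    have hterm : ∀ r : Fin m, (∑ k : Fin s,
        ((1 : Matrix (Fin m × Fin s) (Fin m × Fin s) ℝ) - μ • (Λ ⊗ₖ H)) (p, i) (r, k) *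
          N (r, k) (q, j)) =
        if p = r then ∑ k : Fin s,
          ((1 : Matrix (Fin s) (Fin s) ℝ) + (μ * -Λ p p) • H) i k * N (p, k) (q, j)
        else 0 := by
      intro r
      by_cases hpr : p = r
      · subst hpr
        rw [if_pos rfl]
        refine Finset.sum_congr rfl fun k _ => ?_
        rw [hM p k, if_pos rfl]
      · rw [Finset.sum_eq_zero]
        · simp [hpr]
        · intro k _
          rw [hM, if_neg hpr, zero_mul]
    rw [Finset.sum_congr rfl fun r _ => hterm r, Finset.sum_ite_eq Finset.univ p _,
      if_pos (Finset.mem_univ p)]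
    have hNpk : ∀ k : Fin s, N (p, k) (q, j) =
        if p = q then (((1 : Matrix (Fin s) (Fin s) ℝ) + (μ * -Λ p p) • H)⁻¹) k j else 0 := by
      intro k; rw [hNdef]
    by_cases hpq : p = q
    · subst hpq
      have hBinv : ((1 : Matrix (Fin s) (Fin s) ℝ) + (μ * -Λ p p) • H) *
          ((1 : Matrix (Fin s) (Fin s) ℝ) + (μ * -Λ p p) • H)⁻¹ = 1 :=
        Matrix.mul_nonsing_inv _ (isUnit_iff_ne_zero.mpr (hblock _ (htnn p)).1)
      calc (∑ k : Fin s, ((1 : Matrix (Fin s) (Fin s) ℝ) + (μ * -Λ p p) • H) i k *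
              N (p, k) (p, j))
          = ∑ k : Fin s, ((1 : Matrix (Fin s) (Fin s) ℝ) + (μ * -Λ p p) • H) i k *
              (((1 : Matrix (Fin s) (Fin s) ℝ) + (μ * -Λ p p) • H)⁻¹) k j := by
            refine Finset.sum_congr rfl fun k _ => ?_
            rw [hNpk k, if_pos rfl]
        _ = (((1 : Matrix (Fin s) (Fin s) ℝ) + (μ * -Λ p p) • H) *
              ((1 : Matrix (Fin s) (Fin s) ℝ) + (μ * -Λ p p) • H)⁻¹) i j :=
            (Matrix.mul_apply).symm
        _ = (1 : Matrix (Fin s) (Fin s) ℝ) i j := by rw [hBinv]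
        _ = (1 : Matrix (Fin m × Fin s) (Fin m × Fin s) ℝ) (p, i) (p, j) := by
            simp [Matrix.one_apply, Prod.ext_iff]
    · rw [Finset.sum_eq_zero fun k _ => by rw [hNpk k, if_neg hpq, mul_zero]]
      have : ((p, i) : Fin m × Fin s) ≠ (q, j) := by simp [Prod.ext_iff, hpq]
      rw [Matrix.one_apply_ne this]
  have hinv : ((1 : Matrix (Fin m × Fin s) (Fin m × Fin s) ℝ) - μ • (Λ ⊗ₖ H))⁻¹ = N :=
    Matrix.inv_eq_right_inv hMN
  rw [hinv]
  have hAe : ∀ γ δ, |A γ δ| ≤ SA := fun γ δ => entry_le A γ δ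
  have hGe : ∀ γ δ, |Gk γ δ| ≤ SG := fun γ δ => entry_le Gk γ δ
  have hAN : ∀ δ, |(A * N) α δ| ≤ n * (SA * CB) := by
    intro δ
    rw [Matrix.mul_apply]
    refine le_trans (Finset.abs_sum_le_sum_abs _ _) ?_
    have : ∀ γ ∈ (Finset.univ : Finset (Fin m × Fin s)), |A α γ * N γ δ| ≤ SA * CB := by
      intro γ _
      rw [abs_mul]
      exact mul_le_mul (hAe _ _) (hNle _ _) (abs_nonneg _) hSA0
    refine le_trans (Finset.sum_le_card_nsmul _ _ _ this) ?_
    simp [Finset.card_univ, nsmul_eq_mul, hndef]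
  calc |(A * N * Gk) α β|
      ≤ ∑ δ : Fin m × Fin s, |(A * N) α δ * Gk δ β| := by
        rw [Matrix.mul_apply]
        exact Finset.abs_sum_le_sum_abs _ _
    _ ≤ n * (n * (SA * CB) * SG) := by
        refine le_trans (Finset.sum_le_card_nsmul _ _ (n * (SA * CB) * SG) fun δ _ => ?_) ?_
        · rw [abs_mul]
          exact mul_le_mul (hAN δ) (hGe δ β) (abs_nonneg _)
            (mul_nonneg (Nat.cast_nonneg n) (mul_nonneg hSA0 hCB.le))
        · simp [Finset.card_univ, nsmul_eq_mul, hndef]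
    _ ≤ n * (n * (SA * CB) * SG) + 1 := by linarith
end

section
/- Let G ∈ ℝ^{m×m} be invertible, let Λ ∈ ℝ^{m×m} be diagonal with nonpositive diagonal entries, and let H ∈ ℝ^{s×s} be lower triangular with zero first row and with h_{ii} > 0 for 2 ≤ i ≤ s. Set B := Gᵀ Λ G. Then there exists a constant C > 0 such that for every μ > 0, every entry of the matrix (B ⊗ H) · Φ_μ, where Φ_μ := (G ⊗ I_s)⁻¹ (I_{ms} − μ (Λ ⊗ H))⁻¹ (G ⊗ I_s), has absolute value at most C/(1+μ). -/
open Matrix BigOperators Kronecker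

/-- determinant of `1 - c•H` is positive when `H` is lower triangular
with nonnegative diagonal and `c ≤ 0`. -/
private lemma tri_det_pos {s : ℕ} (H : Matrix (Fin s) (Fin s) ℝ)
    (hlt : ∀ i j : Fin s, i < j → H i j = 0)
    (hnn : ∀ i : Fin s, 0 ≤ H i i)
    (c : ℝ) (hc : c ≤ 0) : 0 < ((1 : Matrix (Fin s) (Fin s) ℝ) - c • H).det := by
  have htri : ((1 : Matrix (Fin s) (Fin s) ℝ) - c • H).BlockTriangular OrderDual.toDual := by
    intro i j hij
    have hij' : i < j := hij
    simp [Matrix.sub_apply, Matrix.smul_apply, Matrix.one_apply, hlt i j hij', ne_of_lt hij']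
  rw [Matrix.det_of_lowerTriangular _ htri]
  apply Finset.prod_pos
  intro i _
  have := hnn i
  simp only [Matrix.sub_apply, Matrix.smul_apply, Matrix.one_apply_eq, smul_eq_mul]
  nlinarith

/-- entry recursion for the inverse of `1 - c•H`. -/
private lemma inv_entry_eq {s : ℕ} (H : Matrix (Fin s) (Fin s) ℝ)
    (hlt : ∀ i j : Fin s, i < j → H i j = 0)
    (hnn : ∀ i : Fin s, 0 ≤ H i i)
    (c : ℝ) (hc : c ≤ 0) (i j : Fin s) :
    ((1 : Matrix (Fin s) (Fin s) ℝ) - c • H)⁻¹ i j * (1 - c * H i i) =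
      (1 : Matrix (Fin s) (Fin s) ℝ) i j +
        c * ∑ k ∈ Finset.univ.erase i,
          H i k * ((1 : Matrix (Fin s) (Fin s) ℝ) - c • H)⁻¹ k j := by
  set A : Matrix (Fin s) (Fin s) ℝ := 1 - c • H with hA
  set X := A⁻¹ with hX
  have hdet : IsUnit A.det := (tri_det_pos H hlt hnn c hc).ne'.isUnit
  have hAX : A * X = 1 := Matrix.mul_nonsing_inv A hdet
  have h1 : ∑ k, A i k * X k j = (1 : Matrix (Fin s) (Fin s) ℝ) i j := by
    rw [← Matrix.mul_apply, hAX]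
  have h2 : ∑ k, A i k * X k j =
      X i j - c * (H i i * X i j + ∑ k ∈ Finset.univ.erase i, H i k * X k j) := by
    have : ∀ k, A i k * X k j = (1 : Matrix (Fin s) (Fin s) ℝ) i k * X k j - c * (H i k * X k j) := by
      intro k
      simp only [hA, Matrix.sub_apply, Matrix.smul_apply, smul_eq_mul]
      ring
    rw [Finset.sum_congr rfl fun k _ => this k, Finset.sum_sub_distrib, ← Finset.mul_sum]
    congr 1
    · rw [← Matrix.mul_apply, Matrix.one_mul]
    · congr 1
      rw [← Finset.add_sum_erase _ _ (Finset.mem_univ i)]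
  rw [h2] at h1
  linarith [h1]

private lemma uniform_inv_bound {s : ℕ} (H : Matrix (Fin s) (Fin s) ℝ)
    (hlt : ∀ i j : Fin s, i < j → H i j = 0)
    (hrow : ∀ i j : Fin s, i.val = 0 → H i j = 0)
    (hdiag : ∀ i : Fin s, 0 < i.val → 0 < H i i) :
    ∃ K > (0:ℝ), ∀ c : ℝ, c ≤ 0 → ∀ i j : Fin s,
      |((1 : Matrix (Fin s) (Fin s) ℝ) - c • H)⁻¹ i j| ≤ K := by
  have hnn : ∀ i : Fin s, 0 ≤ H i i := by
    intro i
    rcases Nat.eq_zero_or_pos i.val with h0 | h0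
    · rw [hrow i i h0]
    · exact (hdiag i h0).le
  suffices h : ∀ n : ℕ, ∃ K > (0:ℝ), ∀ c : ℝ, c ≤ 0 → ∀ i j : Fin s, i.val < n →
      |((1 : Matrix (Fin s) (Fin s) ℝ) - c • H)⁻¹ i j| ≤ K by
    obtain ⟨K, hK, hKb⟩ := h s
    exact ⟨K, hK, fun c hc i j => hKb c hc i j i.isLt⟩
  intro n
  induction n with
  | zero => exact ⟨1, one_pos, fun c hc i j h => absurd h (Nat.not_lt_zero _)⟩
  | succ n ih =>
    obtain ⟨K, hK, hKb⟩ := ih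
    by_cases hns : n < s
    · set i₀ : Fin s := ⟨n, hns⟩ with hi₀
      have hone : ∀ j, |(1 : Matrix (Fin s) (Fin s) ℝ) i₀ j| ≤ 1 := by
        intro j
        rcases eq_or_ne i₀ j with h | h
        · rw [h, Matrix.one_apply_eq]; norm_num
        · rw [Matrix.one_apply_ne h]; norm_num
      have hrowbound : ∃ K' ≥ K, 0 < K' ∧ ∀ c : ℝ, c ≤ 0 → ∀ j : Fin s,
          |((1 : Matrix (Fin s) (Fin s) ℝ) - c • H)⁻¹ i₀ j| ≤ K' := by
        rcases Nat.eq_zero_or_pos n with hn0 | hn0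
        · refine ⟨K + 1, by linarith, by linarith, fun c hc j => ?_⟩
          have heq := inv_entry_eq H hlt hnn c hc i₀ j
          have hz : ∀ k, H i₀ k = 0 := fun k => hrow i₀ k hn0
          have hsum : ∑ k ∈ Finset.univ.erase i₀,
              H i₀ k * ((1 : Matrix (Fin s) (Fin s) ℝ) - c • H)⁻¹ k j = 0 :=
            Finset.sum_eq_zero fun k _ => by rw [hz k]; ring
          rw [hz i₀, hsum, mul_zero, sub_zero, mul_one, add_zero] at heq
          rw [heq]
          linarith [hone j]
        · have hipos : 0 < H i₀ i₀ := hdiag i₀ hn0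
          have hSnn : (0:ℝ) ≤ ∑ k, |H i₀ k| := Finset.sum_nonneg fun k _ => abs_nonneg _
          have hdivnn : (0:ℝ) ≤ (∑ k, |H i₀ k|) * K / H i₀ i₀ :=
            div_nonneg (mul_nonneg hSnn hK.le) hipos.le
          refine ⟨K + 1 + (∑ k, |H i₀ k|) * K / H i₀ i₀, by linarith, by linarith,
            fun c hc j => ?_⟩
          have heq := inv_entry_eq H hlt hnn c hc i₀ j
          have htnn : (0:ℝ) ≤ -c := by linarith
          have hR : |∑ k ∈ Finset.univ.erase i₀,
              H i₀ k * ((1 : Matrix (Fin s) (Fin s) ℝ) - c • H)⁻¹ k j| ≤ (∑ k, |H i₀ k|) * K := by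
            calc |∑ k ∈ Finset.univ.erase i₀,
                H i₀ k * ((1 : Matrix (Fin s) (Fin s) ℝ) - c • H)⁻¹ k j|
                ≤ ∑ k ∈ Finset.univ.erase i₀,
                    |H i₀ k * ((1 : Matrix (Fin s) (Fin s) ℝ) - c • H)⁻¹ k j| :=
                  Finset.abs_sum_le_sum_abs _ _
              _ ≤ ∑ k ∈ Finset.univ.erase i₀, |H i₀ k| * K := by
                  apply Finset.sum_le_sum
                  intro k hk
                  rw [abs_mul]
                  have hne : k ≠ i₀ := (Finset.mem_erase.mp hk).1
                  rcases lt_or_gt_of_ne hne with hki | hik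
                  · have hkn : (k:ℕ) < n := hki
                    exact mul_le_mul_of_nonneg_left (hKb c hc k j hkn) (abs_nonneg _)
                  · rw [hlt i₀ k hik]
                    simp
              _ ≤ ∑ k, |H i₀ k| * K := by
                  apply Finset.sum_le_sum_of_subset_of_nonneg (Finset.erase_subset _ _)
                  intro k _ _; positivity
              _ = (∑ k, |H i₀ k|) * K := by rw [Finset.sum_mul]
          have hdpos : (0:ℝ) < 1 - c * H i₀ i₀ := by nlinarith
          have hXb : |((1 : Matrix (Fin s) (Fin s) ℝ) - c • H)⁻¹ i₀ j| * (1 - c * H i₀ i₀)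
              ≤ 1 + (-c) * ((∑ k, |H i₀ k|) * K) := by
            calc |((1 : Matrix (Fin s) (Fin s) ℝ) - c • H)⁻¹ i₀ j| * (1 - c * H i₀ i₀)
                = |((1 : Matrix (Fin s) (Fin s) ℝ) - c • H)⁻¹ i₀ j * (1 - c * H i₀ i₀)| := by
                  rw [abs_mul, abs_of_pos hdpos]
              _ = |(1 : Matrix (Fin s) (Fin s) ℝ) i₀ j +
                    c * ∑ k ∈ Finset.univ.erase i₀,
                      H i₀ k * ((1 : Matrix (Fin s) (Fin s) ℝ) - c • H)⁻¹ k j| := by rw [heq]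
              _ ≤ |(1 : Matrix (Fin s) (Fin s) ℝ) i₀ j| +
                    |c| * |∑ k ∈ Finset.univ.erase i₀,
                      H i₀ k * ((1 : Matrix (Fin s) (Fin s) ℝ) - c • H)⁻¹ k j| := by
                  rw [← abs_mul]; exact abs_add_le _ _
              _ ≤ 1 + (-c) * ((∑ k, |H i₀ k|) * K) := by
                  rw [abs_of_nonpos hc]
                  gcongr
                  exact hone j
          have hQt : (-c) * (((∑ k, |H i₀ k|) * K / H i₀ i₀) * H i₀ i₀)
              = (-c) * ((∑ k, |H i₀ k|) * K) := by
            rw [div_mul_cancel₀ _ hipos.ne']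
          have hkey : |((1 : Matrix (Fin s) (Fin s) ℝ) - c • H)⁻¹ i₀ j|
              ≤ 1 + (∑ k, |H i₀ k|) * K / H i₀ i₀ := by
            nlinarith [hXb, hQt, mul_nonneg htnn hipos.le, hdivnn, hdpos,
              abs_nonneg (((1 : Matrix (Fin s) (Fin s) ℝ) - c • H)⁻¹ i₀ j)]
          linarith
      obtain ⟨K', hKK', hK'pos, hK'b⟩ := hrowbound
      refine ⟨K', hK'pos, fun c hc i j hin => ?_⟩
      rcases Nat.lt_or_ge i.val n with h | h
      · exact (hKb c hc i j h).trans hKK'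
      · have : i = i₀ := Fin.ext (Nat.le_antisymm (Nat.lt_succ_iff.mp hin) h)
        rw [this]; exact hK'b c hc j
    · refine ⟨K, hK, fun c hc i j hin => hKb c hc i j ?_⟩
      have := i.isLt
      omega

private lemma block_bound {s : ℕ} (H : Matrix (Fin s) (Fin s) ℝ)
    (hlt : ∀ i j : Fin s, i < j → H i j = 0)
    (hrow : ∀ i j : Fin s, i.val = 0 → H i j = 0)
    (hdiag : ∀ i : Fin s, 0 < i.val → 0 < H i i)
    (lam : ℝ) (hlam : lam ≤ 0) :
    ∃ C > (0:ℝ), ∀ μ : ℝ, 0 < μ → ∀ i j : Fin s,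
      |((lam • H) * ((1 : Matrix (Fin s) (Fin s) ℝ) - (μ * lam) • H)⁻¹) i j| ≤ C / (1 + μ) := by
  have hnn : ∀ i : Fin s, 0 ≤ H i i := by
    intro i
    rcases Nat.eq_zero_or_pos i.val with h0 | h0
    · rw [hrow i i h0]
    · exact (hdiag i h0).le
  obtain ⟨K, hK, hKb⟩ := uniform_inv_bound H hlt hrow hdiag
  set S : ℝ := ∑ i, ∑ k, |H i k| with hS
  have hSnn : 0 ≤ S := Finset.sum_nonneg fun i _ => Finset.sum_nonneg fun k _ => abs_nonneg _
  set B₁ : ℝ := -lam * S * K with hB₁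
  set B₂ : ℝ := 1 + K with hB₂
  have hB₁nn : 0 ≤ B₁ := by
    apply mul_nonneg (mul_nonneg (by linarith) hSnn) hK.le
  have hB₂pos : 0 < B₂ := by simp [hB₂]; linarith
  refine ⟨2 * max B₁ B₂, by positivity, fun μ hμ i j => ?_⟩
  have hc : μ * lam ≤ 0 := mul_nonpos_of_nonneg_of_nonpos hμ.le hlam
  set X := ((1 : Matrix (Fin s) (Fin s) ℝ) - (μ * lam) • H)⁻¹ with hX
  have hXb : ∀ k l, |X k l| ≤ K := fun k l => hKb (μ * lam) hc k l
  -- bound 1 : |entry| ≤ B₁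
  have hbd1 : |((lam • H) * X) i j| ≤ B₁ := by
    rw [Matrix.mul_apply]
    calc |∑ k, (lam • H) i k * X k j| ≤ ∑ k, |(lam • H) i k * X k j| :=
          Finset.abs_sum_le_sum_abs _ _
      _ ≤ ∑ k, (-lam) * |H i k| * K := by
          apply Finset.sum_le_sum
          intro k _
          rw [Matrix.smul_apply, smul_eq_mul, abs_mul, abs_mul, abs_of_nonpos hlam]
          exact mul_le_mul_of_nonneg_left (hXb k j)
            (mul_nonneg (by linarith) (abs_nonneg _))
      _ = (-lam) * ((∑ k, |H i k|) * K) := by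
          simp [Finset.mul_sum, Finset.sum_mul, mul_assoc]
      _ ≤ (-lam) * (S * K) := by
          gcongr
          · linarith
          · exact Finset.single_le_sum (f := fun i => ∑ k, |H i k|)
              (fun i _ => Finset.sum_nonneg fun k _ => abs_nonneg _) (Finset.mem_univ i)
      _ = B₁ := by rw [hB₁]; ring
  -- bound 2 : |entry| ≤ B₂ / μ
  have hdet : IsUnit ((1 : Matrix (Fin s) (Fin s) ℝ) - (μ * lam) • H).det :=
    (tri_det_pos H hlt hnn (μ * lam) hc).ne'.isUnit
  have hmulinv : ((1 : Matrix (Fin s) (Fin s) ℝ) - (μ * lam) • H) * X = 1 :=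
    Matrix.mul_nonsing_inv _ hdet
  have hident : (lam • H) * X = μ⁻¹ • (X - 1) := by
    have h1 : (lam • H) = μ⁻¹ • ((1 : Matrix (Fin s) (Fin s) ℝ) -
        ((1 : Matrix (Fin s) (Fin s) ℝ) - (μ * lam) • H)) := by
      rw [sub_sub_cancel, smul_smul]
      congr 1
      field_simp
    rw [h1, Matrix.smul_mul, Matrix.sub_mul, Matrix.one_mul, hmulinv]
  have hbd2 : |((lam • H) * X) i j| ≤ B₂ / μ := by
    rw [hident]
    have hone : |(1 : Matrix (Fin s) (Fin s) ℝ) i j| ≤ 1 := by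
      rcases eq_or_ne i j with h | h
      · rw [h, Matrix.one_apply_eq]; norm_num
      · rw [Matrix.one_apply_ne h]; norm_num
    simp only [Matrix.smul_apply, Matrix.sub_apply, smul_eq_mul]
    rw [abs_mul, abs_of_pos (inv_pos.mpr hμ)]
    rw [div_eq_inv_mul]
    gcongr
    calc |X i j - (1 : Matrix (Fin s) (Fin s) ℝ) i j|
        ≤ |X i j| + |(1 : Matrix (Fin s) (Fin s) ℝ) i j| := abs_sub _ _
      _ ≤ K + 1 := by have := hXb i j; linarith
      _ = B₂ := by rw [hB₂]; ring
  -- combine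
  rcases le_total μ 1 with hμ1 | hμ1
  · calc |((lam • H) * X) i j| ≤ B₁ := hbd1
      _ ≤ max B₁ B₂ := le_max_left _ _
      _ ≤ 2 * max B₁ B₂ / (1 + μ) := by
          rw [le_div_iff₀ (by linarith)]
          have : 0 ≤ max B₁ B₂ := le_trans hB₁nn (le_max_left _ _)
          nlinarith
  · calc |((lam • H) * X) i j| ≤ B₂ / μ := hbd2
      _ ≤ 2 * B₂ / (1 + μ) := by
          rw [div_le_div_iff₀ hμ (by linarith)]
          nlinarith
      _ ≤ 2 * max B₁ B₂ / (1 + μ) := by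
          gcongr
          exact le_max_right _ _

private lemma triple_bound {n : Type*} [Fintype n] (P Z Q : Matrix n n ℝ) (c : ℝ)
    (hc : 0 ≤ c) (hZ : ∀ γ δ, |Z γ δ| ≤ c) (α β : n) :
    |(P * Z * Q) α β| ≤ (∑ γ, |P α γ|) * c * (∑ δ, |Q δ β|) := by
  calc |(P * Z * Q) α β| = |∑ δ, ∑ γ, P α γ * Z γ δ * Q δ β| := by
        simp [Matrix.mul_apply, Finset.sum_mul]
    _ ≤ ∑ δ, ∑ γ, |P α γ * Z γ δ * Q δ β| := by
        refine (Finset.abs_sum_le_sum_abs _ _).trans ?_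
        exact Finset.sum_le_sum fun δ _ => Finset.abs_sum_le_sum_abs _ _
    _ ≤ ∑ δ, ∑ γ, |P α γ| * c * |Q δ β| := by
        refine Finset.sum_le_sum fun δ _ => Finset.sum_le_sum fun γ _ => ?_
        rw [abs_mul, abs_mul]
        exact mul_le_mul_of_nonneg_right
          (mul_le_mul_of_nonneg_left (hZ γ δ) (abs_nonneg _)) (abs_nonneg _)
    _ = ∑ γ, ∑ δ, |P α γ| * c * |Q δ β| := Finset.sum_comm
    _ = (∑ γ, |P α γ|) * c * (∑ δ, |Q δ β|) := by
        rw [Finset.sum_mul, Finset.sum_mul]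
        refine Finset.sum_congr rfl fun γ _ => ?_
        rw [Finset.mul_sum]

/-- with `B := Gᵀ Λ G`, `G` invertible, `Λ` diagonal with nonpositive diagonal,
and `H` lower triangular with zero first row and `h_{ii} > 0` for `2 ≤ i ≤ s`, there is
`C > 0` such that for all `μ > 0` every entry of `(B ⊗ H) Φ_μ`, where
`Φ_μ := (G ⊗ I_s)⁻¹ (I − μ (Λ ⊗ H))⁻¹ (G ⊗ I_s)`, is bounded by `C/(1+μ)`. -/
theorem stmt12 {m s : ℕ} (G : Matrix (Fin m) (Fin m) ℝ) (hG : IsUnit G)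
    (Λ : Matrix (Fin m) (Fin m) ℝ) (hΛ : Λ.IsDiag) (hΛd : ∀ p : Fin m, Λ p p ≤ 0)
    (H : Matrix (Fin s) (Fin s) ℝ)
    (hlt : ∀ i j : Fin s, i < j → H i j = 0)
    (hrow : ∀ i j : Fin s, i.val = 0 → H i j = 0)
    (hdiag : ∀ i : Fin s, 0 < i.val → 0 < H i i) :
    ∃ C > (0 : ℝ), ∀ μ : ℝ, 0 < μ → ∀ α β : Fin m × Fin s,
      |(((Gᵀ * Λ * G) ⊗ₖ H) *
          ((G ⊗ₖ (1 : Matrix (Fin s) (Fin s) ℝ))⁻¹ *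
            ((1 : Matrix (Fin m × Fin s) (Fin m × Fin s) ℝ) - μ • (Λ ⊗ₖ H))⁻¹ *
            (G ⊗ₖ (1 : Matrix (Fin s) (Fin s) ℝ)))) α β| ≤ C / (1 + μ) := by
  have hnn : ∀ i : Fin s, 0 ≤ H i i := by
    intro i
    rcases Nat.eq_zero_or_pos i.val with h0 | h0
    · rw [hrow i i h0]
    · exact (hdiag i h0).le
  have hGdet : IsUnit G.det := (Matrix.isUnit_iff_isUnit_det G).mp hG
  choose Cp hCp hCpb using fun p : Fin m =>
    block_bound H hlt hrow hdiag (Λ p p) (hΛd p)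
  set C₀ : ℝ := 1 + ∑ p, Cp p with hC₀
  have hsumCp : 0 ≤ ∑ p, Cp p := Finset.sum_nonneg fun p _ => (hCp p).le
  have hC₀pos : 0 < C₀ := by rw [hC₀]; linarith
  have hC₀le : ∀ p, Cp p ≤ C₀ := by
    intro p
    have := Finset.single_le_sum (f := Cp) (fun q _ => (hCp q).le) (Finset.mem_univ p)
    rw [hC₀]; linarith
  set P : Matrix (Fin m × Fin s) (Fin m × Fin s) ℝ :=
    Gᵀ ⊗ₖ (1 : Matrix (Fin s) (Fin s) ℝ) with hPdef
  set Q : Matrix (Fin m × Fin s) (Fin m × Fin s) ℝ :=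
    G ⊗ₖ (1 : Matrix (Fin s) (Fin s) ℝ) with hQdef
  set DP : ℝ := ∑ α : Fin m × Fin s, ∑ γ : Fin m × Fin s, |P α γ| with hDP
  set DQ : ℝ := ∑ β : Fin m × Fin s, ∑ δ : Fin m × Fin s, |Q δ β| with hDQ
  have hDPnn : 0 ≤ DP :=
    Finset.sum_nonneg fun α _ => Finset.sum_nonneg fun γ _ => abs_nonneg _
  have hDQnn : 0 ≤ DQ :=
    Finset.sum_nonneg fun β _ => Finset.sum_nonneg fun δ _ => abs_nonneg _
  refine ⟨(DP + 1) * C₀ * (DQ + 1),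
    mul_pos (mul_pos (by linarith) hC₀pos) (by linarith), fun μ hμ α β => ?_⟩
  -- block inverses
  have hcμ : ∀ p : Fin m, μ * Λ p p ≤ 0 :=
    fun p => mul_nonpos_of_nonneg_of_nonpos hμ.le (hΛd p)
  have hApinv : ∀ p : Fin m,
      ((1 : Matrix (Fin s) (Fin s) ℝ) - (μ * Λ p p) • H) *
        ((1 : Matrix (Fin s) (Fin s) ℝ) - (μ * Λ p p) • H)⁻¹ = 1 :=
    fun p => Matrix.mul_nonsing_inv _ ((tri_det_pos H hlt hnn _ (hcμ p)).ne'.isUnit)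
  -- the entrywise description of 1 - μ•(Λ ⊗ₖ H)
  have hent : ∀ (p r : Fin m) (i k : Fin s),
      ((1 : Matrix (Fin m × Fin s) (Fin m × Fin s) ℝ) - μ • (Λ ⊗ₖ H)) (p, i) (r, k)
        = if p = r then ((1 : Matrix (Fin s) (Fin s) ℝ) - (μ * Λ p p) • H) i k else 0 := by
    intro p r i k
    by_cases hpr : p = r
    · subst hpr
      rcases eq_or_ne i k with h | h
      · simp [Matrix.sub_apply, Matrix.smul_apply, Matrix.kroneckerMap_apply,
          Matrix.one_apply, h, Prod.ext_iff, mul_assoc]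
      · simp [Matrix.sub_apply, Matrix.smul_apply, Matrix.kroneckerMap_apply,
          Matrix.one_apply, h, Prod.ext_iff, mul_assoc]
    · have h0 : Λ p r = 0 := hΛ hpr
      simp [Matrix.sub_apply, Matrix.smul_apply, Matrix.kroneckerMap_apply, Matrix.one_apply,
        Prod.mk.injEq, hpr, h0]
  -- the explicit inverse Y
  set Y : Matrix (Fin m × Fin s) (Fin m × Fin s) ℝ :=
    Matrix.of (fun pi qj => if pi.1 = qj.1
      then ((1 : Matrix (Fin s) (Fin s) ℝ) - (μ * Λ pi.1 pi.1) • H)⁻¹ pi.2 qj.2 else 0)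
    with hYdef
  have hYapp : ∀ (r q : Fin m) (k j : Fin s), Y (r, k) (q, j) =
      if r = q then ((1 : Matrix (Fin s) (Fin s) ℝ) - (μ * Λ r r) • H)⁻¹ k j else 0 :=
    fun r q k j => rfl
  have hWY : ((1 : Matrix (Fin m × Fin s) (Fin m × Fin s) ℝ) - μ • (Λ ⊗ₖ H))⁻¹ = Y := by
    apply Matrix.inv_eq_right_inv
    ext ⟨p, i⟩ ⟨q, j⟩
    rw [Matrix.mul_apply, Fintype.sum_prod_type]
    rw [Finset.sum_eq_single p]
    · by_cases hpq : p = q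
      · subst hpq
        have hterm : ∀ k : Fin s,
            ((1 : Matrix (Fin m × Fin s) (Fin m × Fin s) ℝ) - μ • (Λ ⊗ₖ H)) (p, i) (p, k) *
              Y (p, k) (p, j)
            = ((1 : Matrix (Fin s) (Fin s) ℝ) - (μ * Λ p p) • H) i k *
                ((1 : Matrix (Fin s) (Fin s) ℝ) - (μ * Λ p p) • H)⁻¹ k j := by
          intro k
          rw [hent p p i k, if_pos rfl, hYapp p p k j, if_pos rfl]
        rw [Finset.sum_congr rfl fun k _ => hterm k, ← Matrix.mul_apply, hApinv p]
        simp [Matrix.one_apply, Prod.ext_iff]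
      · have : ∀ k : Fin s,
            ((1 : Matrix (Fin m × Fin s) (Fin m × Fin s) ℝ) - μ • (Λ ⊗ₖ H)) (p, i) (p, k) *
              Y (p, k) (q, j) = 0 := by
          intro k
          rw [hYapp p q k j, if_neg hpq, mul_zero]
        rw [Finset.sum_congr rfl fun k _ => this k, Finset.sum_const_zero]
        have : ((p, i) : Fin m × Fin s) ≠ (q, j) := by
          intro h; exact hpq (congrArg Prod.fst h)
        rw [Matrix.one_apply_ne this]
    · intro r _ hrp
      apply Finset.sum_eq_zero
      intro k _
      rw [hent p r i k, if_neg (fun h => hrp h.symm), zero_mul]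
    · intro h; exact absurd (Finset.mem_univ p) h
  -- the entrywise bound on Z = (Λ ⊗ₖ H) * Y
  have hZb : ∀ γ δ : Fin m × Fin s, |((Λ ⊗ₖ H) * Y) γ δ| ≤ C₀ / (1 + μ) := by
    rintro ⟨p, i⟩ ⟨q, j⟩
    have hz : ((Λ ⊗ₖ H) * Y) (p, i) (q, j) =
        if p = q then ((Λ p p • H) *
          ((1 : Matrix (Fin s) (Fin s) ℝ) - (μ * Λ p p) • H)⁻¹) i j else 0 := by
      rw [Matrix.mul_apply, Fintype.sum_prod_type]
      rw [Finset.sum_eq_single p]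
      · by_cases hpq : p = q
        · subst hpq
          rw [if_pos rfl, Matrix.mul_apply]
          apply Finset.sum_congr rfl
          intro k _
          rw [hYapp p p k j, if_pos rfl, Matrix.kroneckerMap_apply, Matrix.smul_apply,
            smul_eq_mul]
        · rw [if_neg hpq]
          apply Finset.sum_eq_zero
          intro k _
          rw [hYapp p q k j, if_neg hpq, mul_zero]
      · intro r _ hrp
        apply Finset.sum_eq_zero
        intro k _
        have h0 : Λ p r = 0 := hΛ (fun h => hrp h.symm)
        rw [Matrix.kroneckerMap_apply, h0, zero_mul, zero_mul]
      · intro h; exact absurd (Finset.mem_univ p) h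
    rw [hz]
    by_cases hpq : p = q
    · rw [if_pos hpq]
      refine (hCpb p μ hμ i j).trans ?_
      have h1μ : (0:ℝ) < 1 + μ := by linarith
      rw [div_le_div_iff₀ h1μ h1μ]
      nlinarith [hC₀le p]
    · rw [if_neg hpq, abs_zero]
      positivity
  -- assemble the matrix identity
  have hQinv : Q⁻¹ = G⁻¹ ⊗ₖ (1 : Matrix (Fin s) (Fin s) ℝ) := by
    rw [hQdef, Matrix.inv_kronecker, inv_one]
  have hQQ : Q * Q⁻¹ = 1 := by
    rw [hQinv, hQdef, ← Matrix.mul_kronecker_mul, Matrix.mul_nonsing_inv G hGdet,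
      Matrix.one_mul, Matrix.one_kronecker_one]
  have hfact : (Gᵀ * Λ * G) ⊗ₖ H = P * ((Λ ⊗ₖ H) * Q) := by
    calc (Gᵀ * Λ * G) ⊗ₖ H = (Gᵀ * (Λ * G)) ⊗ₖ ((1 : Matrix (Fin s) (Fin s) ℝ) * (H * 1)) := by
          rw [Matrix.mul_assoc, Matrix.one_mul, Matrix.mul_one]
      _ = P * ((Λ * G) ⊗ₖ (H * 1)) := by rw [Matrix.mul_kronecker_mul, hPdef]
      _ = P * ((Λ ⊗ₖ H) * Q) := by rw [Matrix.mul_kronecker_mul, hQdef]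
  have hM : ((Gᵀ * Λ * G) ⊗ₖ H) *
      (Q⁻¹ * ((1 : Matrix (Fin m × Fin s) (Fin m × Fin s) ℝ) - μ • (Λ ⊗ₖ H))⁻¹ * Q)
      = P * ((Λ ⊗ₖ H) * Y) * Q := by
    rw [hWY, hfact]
    simp only [Matrix.mul_assoc]
    rw [← Matrix.mul_assoc Q Q⁻¹, hQQ, Matrix.one_mul]
  rw [hM]
  have htb := triple_bound P ((Λ ⊗ₖ H) * Y) Q (C₀ / (1 + μ)) (by positivity) hZb α β
  refine htb.trans ?_
  have hrwC : (DP + 1) * C₀ * (DQ + 1) / (1 + μ) = (DP + 1) * (C₀ / (1 + μ)) * (DQ + 1) := by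
    ring
  rw [hrwC]
  have hrowsum : ∑ γ : Fin m × Fin s, |P α γ| ≤ DP + 1 := by
    have := Finset.single_le_sum (f := fun α : Fin m × Fin s => ∑ γ : Fin m × Fin s, |P α γ|)
      (fun a _ => Finset.sum_nonneg fun γ _ => abs_nonneg _) (Finset.mem_univ α)
    rw [hDP] at *
    linarith
  have hcolsum : ∑ δ : Fin m × Fin s, |Q δ β| ≤ DQ + 1 := by
    have := Finset.single_le_sum (f := fun β : Fin m × Fin s => ∑ δ : Fin m × Fin s, |Q δ β|)
      (fun a _ => Finset.sum_nonneg fun δ _ => abs_nonneg _) (Finset.mem_univ β)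
    rw [hDQ] at *
    linarith
  have hmidnn : (0:ℝ) ≤ C₀ / (1 + μ) := le_of_lt (div_pos hC₀pos (by linarith))
  have hcolnn : (0:ℝ) ≤ ∑ δ : Fin m × Fin s, |Q δ β| :=
    Finset.sum_nonneg fun δ _ => abs_nonneg _
  exact mul_le_mul (mul_le_mul_of_nonneg_right hrowsum hmidnn) hcolsum hcolnn
    (mul_nonneg (by linarith) hmidnn)
end

section
/- Let N ∈ ℕ and let c : ℤ → ℂ be a function with c_k = 0 whenever |k| > N. Define f : ℝ → ℂ by f(x) = Σ_{k=−N}^{N} c_k e^{ikx}. Then ∫₀^{2π} |f′(x)|² dx ≤ N² ∫₀^{2π} |f(x)|² dx. -/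
open scoped BigOperators

open intervalIntegral in
private lemma orth17 (m : ℤ) :
    (∫ x in (0:ℝ)..(2 * Real.pi), Complex.exp (Complex.I * m * x)) =
      if m = 0 then (2 * Real.pi : ℂ) else 0 := by
  rcases eq_or_ne m 0 with h | h
  · simp [h]
  · rw [if_neg h]
    have hc : Complex.I * m ≠ 0 :=
      mul_ne_zero Complex.I_ne_zero (by exact_mod_cast h)
    rw [integral_exp_mul_complex hc]
    have h1 : Complex.exp (Complex.I * m * (2 * (Real.pi : ℂ))) = 1 := by
      rw [show Complex.I * m * (2 * (Real.pi : ℂ))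
            = (m : ℂ) * (2 * (Real.pi : ℂ) * Complex.I) by ring]
      exact Complex.exp_int_mul_two_pi_mul_I m
    push_cast
    simp [h1]

private lemma key17 (s : Finset ℤ) (a : ℤ → ℂ) :
    (∫ x in (0:ℝ)..(2 * Real.pi),
        ‖∑ k ∈ s, a k * Complex.exp (Complex.I * k * x)‖ ^ 2) =
      2 * Real.pi * ∑ k ∈ s, ‖a k‖ ^ 2 := by
  set g : ℝ → ℂ := fun x => ∑ k ∈ s, a k * Complex.exp (Complex.I * k * x) with hg
  have hgc : Continuous g := continuous_finset_sum _ fun k _ => by fun_prop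
  have hint : IntervalIntegrable (fun x => g x * (starRingEnd ℂ) (g x))
      MeasureTheory.volume 0 (2 * Real.pi) :=
    (hgc.mul (Complex.continuous_conj.comp hgc)).intervalIntegrable _ _
  have hstep : (∫ x in (0:ℝ)..(2 * Real.pi), g x * (starRingEnd ℂ) (g x)) =
      ((2 * Real.pi * ∑ k ∈ s, ‖a k‖ ^ 2 : ℝ) : ℂ) := by
    have hexpand : ∀ x : ℝ, g x * (starRingEnd ℂ) (g x) =
        ∑ j ∈ s, ∑ k ∈ s, (a j * (starRingEnd ℂ) (a k)) *
          Complex.exp (Complex.I * ((j : ℤ) - k) * x) := by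
      intro x
      rw [hg]
      simp only [map_sum, Finset.sum_mul_sum, map_mul]
      refine Finset.sum_congr rfl fun j _ => Finset.sum_congr rfl fun k _ => ?_
      have hconj : (starRingEnd ℂ) (Complex.exp (Complex.I * k * x)) =
          Complex.exp (-(Complex.I * k * x)) := by
        rw [← Complex.exp_conj]
        congr 1
        simp [Complex.conj_I]
      have he : Complex.exp (Complex.I * j * x) * Complex.exp (-(Complex.I * k * x))
          = Complex.exp (Complex.I * ((j : ℂ) - k) * x) := by
        rw [← Complex.exp_add]
        congr 1
        push_cast
        ring
      rw [hconj, show ((((j : ℤ) : ℂ)) - (((k : ℤ) : ℂ))) = ((j : ℂ) - (k : ℂ)) by push_cast; ring,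
        ← he]
      ring
    calc (∫ x in (0:ℝ)..(2 * Real.pi), g x * (starRingEnd ℂ) (g x))
        = ∫ x in (0:ℝ)..(2 * Real.pi), ∑ j ∈ s, ∑ k ∈ s,
            (a j * (starRingEnd ℂ) (a k)) * Complex.exp (Complex.I * ((j : ℤ) - k) * x) := by
          simp_rw [hexpand]
      _ = ∑ j ∈ s, ∑ k ∈ s, (a j * (starRingEnd ℂ) (a k)) *
            ∫ x in (0:ℝ)..(2 * Real.pi), Complex.exp (Complex.I * ((j : ℤ) - k) * x) := by
          rw [intervalIntegral.integral_finset_sum]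
          · refine Finset.sum_congr rfl fun j _ => ?_
            rw [intervalIntegral.integral_finset_sum]
            · exact Finset.sum_congr rfl fun k _ =>
                (intervalIntegral.integral_const_mul _ _)
            · intro k _
              exact (by fun_prop :
                Continuous fun x : ℝ => (a j * (starRingEnd ℂ) (a k)) *
                  Complex.exp (Complex.I * ((j : ℤ) - k) * x)).intervalIntegrable _ _
          · intro j _
            refine (Continuous.intervalIntegrable ?_ _ _)
            exact continuous_finset_sum _ fun k _ => by fun_prop
      _ = ∑ j ∈ s, ∑ k ∈ s, (a j * (starRingEnd ℂ) (a k)) *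
            (if ((j : ℤ) - k) = 0 then (2 * Real.pi : ℂ) else 0) := by
          refine Finset.sum_congr rfl fun j _ => Finset.sum_congr rfl fun k _ => ?_
          rw [show (((j : ℤ) : ℂ) - ((k : ℤ) : ℂ)) = (((j - k : ℤ) : ℂ)) by push_cast; ring,
            orth17]
      _ = ∑ j ∈ s, (a j * (starRingEnd ℂ) (a j)) * (2 * Real.pi : ℂ) := by
          refine Finset.sum_congr rfl fun j hj => ?_
          rw [Finset.sum_eq_single j]
          · simp
          · intro k _ hk
            rw [if_neg (by omega), mul_zero]
          · intro h; exact absurd hj h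
      _ = ((2 * Real.pi * ∑ k ∈ s, ‖a k‖ ^ 2 : ℝ) : ℂ) := by
          push_cast
          rw [Finset.mul_sum]
          refine Finset.sum_congr rfl fun j _ => ?_
          rw [Complex.mul_conj, ← Complex.sq_norm]
          push_cast
          ring
  have habs : ∀ x : ℝ, ‖g x‖ ^ 2 = (g x * (starRingEnd ℂ) (g x)).re := by
    intro x
    rw [Complex.sq_norm, Complex.mul_conj, Complex.ofReal_re]
  calc (∫ x in (0:ℝ)..(2 * Real.pi), ‖g x‖ ^ 2)
      = ∫ x in (0:ℝ)..(2 * Real.pi), (g x * (starRingEnd ℂ) (g x)).re := by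
        simp_rw [habs]
    _ = (∫ x in (0:ℝ)..(2 * Real.pi), g x * (starRingEnd ℂ) (g x)).re := by
        simpa only [Complex.reCLM_apply] using Complex.reCLM.intervalIntegral_comp_comm hint
    _ = 2 * Real.pi * ∑ k ∈ s, ‖a k‖ ^ 2 := by
        rw [hstep, Complex.ofReal_re]

/-- for a trigonometric polynomial `f(x) = Σ_{|k| ≤ N} c_k e^{ikx}`,
`∫₀^{2π} |f′|² ≤ N² ∫₀^{2π} |f|²`. -/
theorem stmt17 (N : ℕ) (c : ℤ → ℂ) (hc : ∀ k : ℤ, (N : ℤ) < |k| → c k = 0)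
    (f : ℝ → ℂ)
    (hf : ∀ x : ℝ, f x = ∑ k ∈ Finset.Icc (-(N : ℤ)) (N : ℤ),
      c k * Complex.exp (Complex.I * (k : ℂ) * (x : ℂ))) :
    (∫ x in (0:ℝ)..(2 * Real.pi), ‖deriv f x‖ ^ 2) ≤
      (N : ℝ) ^ 2 * ∫ x in (0:ℝ)..(2 * Real.pi), ‖f x‖ ^ 2 := by
  have hfe : f = fun x : ℝ => ∑ k ∈ Finset.Icc (-(N : ℤ)) (N : ℤ),
      c k * Complex.exp (Complex.I * (k : ℂ) * (x : ℂ)) := funext hf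
  have hderiv : ∀ x : ℝ, deriv f x = ∑ k ∈ Finset.Icc (-(N : ℤ)) (N : ℤ),
      (c k * (Complex.I * k)) * Complex.exp (Complex.I * (k : ℂ) * (x : ℂ)) := by
    intro x
    have h : HasDerivAt f (∑ k ∈ Finset.Icc (-(N : ℤ)) (N : ℤ),
        (c k * (Complex.I * k)) * Complex.exp (Complex.I * (k : ℂ) * (x : ℂ))) x := by
      rw [hfe]
      refine HasDerivAt.fun_sum fun k _ => ?_
      have h1 : HasDerivAt (fun x : ℝ => Complex.I * (k : ℂ) * (x : ℂ))
          (Complex.I * k) x := by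
        simpa using (Complex.ofRealCLM.hasDerivAt (x := x)).const_mul (Complex.I * (k : ℂ))
      have h2 := (h1.cexp).const_mul (c k)
      simpa [mul_comm, mul_assoc, mul_left_comm] using h2
    exact h.deriv
  rw [show (∫ x in (0:ℝ)..(2 * Real.pi), ‖deriv f x‖ ^ 2)
      = ∫ x in (0:ℝ)..(2 * Real.pi), ‖∑ k ∈ Finset.Icc (-(N : ℤ)) (N : ℤ),
          (c k * (Complex.I * k)) * Complex.exp (Complex.I * (k : ℂ) * (x : ℂ))‖ ^ 2 by
        refine intervalIntegral.integral_congr fun x _ => ?_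
        rw [hderiv]]
  rw [show (∫ x in (0:ℝ)..(2 * Real.pi), ‖f x‖ ^ 2)
      = ∫ x in (0:ℝ)..(2 * Real.pi), ‖∑ k ∈ Finset.Icc (-(N : ℤ)) (N : ℤ),
          c k * Complex.exp (Complex.I * (k : ℂ) * (x : ℂ))‖ ^ 2 by
        refine intervalIntegral.integral_congr fun x _ => ?_
        rw [hf]]
  rw [key17, key17]
  have hsum : (∑ k ∈ Finset.Icc (-(N : ℤ)) (N : ℤ),
      ‖c k * (Complex.I * k)‖ ^ 2) ≤
      (N : ℝ) ^ 2 * ∑ k ∈ Finset.Icc (-(N : ℤ)) (N : ℤ), ‖c k‖ ^ 2 := by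
    rw [Finset.mul_sum]
    refine Finset.sum_le_sum fun k hk => ?_
    have hk1 : (-(N : ℝ)) ≤ (k : ℝ) := by exact_mod_cast (Finset.mem_Icc.mp hk).1
    have hk2 : (k : ℝ) ≤ (N : ℝ) := by exact_mod_cast (Finset.mem_Icc.mp hk).2
    have h2 : (k : ℝ) ^ 2 ≤ (N : ℝ) ^ 2 := sq_le_sq' hk1 hk2
    have h3 : ‖c k * (Complex.I * k)‖ ^ 2
        = ‖c k‖ ^ 2 * (k : ℝ) ^ 2 := by
      rw [norm_mul, norm_mul, Complex.norm_I, one_mul, Complex.norm_intCast, mul_pow, sq_abs]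
    rw [h3]
    nlinarith [sq_nonneg (‖c k‖)]
  calc 2 * Real.pi * ∑ k ∈ Finset.Icc (-(N : ℤ)) (N : ℤ),
        ‖c k * (Complex.I * k)‖ ^ 2
      ≤ 2 * Real.pi * ((N : ℝ) ^ 2 * ∑ k ∈ Finset.Icc (-(N : ℤ)) (N : ℤ),
          ‖c k‖ ^ 2) :=
        mul_le_mul_of_nonneg_left hsum (by positivity)
    _ = (N : ℝ) ^ 2 * (2 * Real.pi * ∑ k ∈ Finset.Icc (-(N : ℤ)) (N : ℤ),
          ‖c k‖ ^ 2) := by ring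
end
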